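/- arXiv:1803.01338 — 5 statements merged into one kernel-verified Lean document; each statement's English description precedes it below -/
import Mathlib

section
/- Let d = (d_1,…,d_n) be a graphical degree sequence with n ≥ 1, and let k ≥ 0 be an integer such that every graph in G'(d) is within JS distance at most k of some element of G(d). Then the number of graphs in G'(d) is at most (k+1) · n^(3k) times the number of graphs in G(d). -/
/-!
Every JS move replaces `G` by `G ∆ E`, where `E` consists of (at most) the two edges `ab`, `bc`
of a vertex triple `(a, b, c)`. Along a chain of length `m ≤ k` these differences add up, so a
graph of `𝒢'(d)` is `H ∆ X` with `H ∈ 𝒢(d)` and `X` a symmetric-difference sum of `k` such edge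
pairs (shorter sums are padded with the triple `(v, v, v)`, which contributes no edge). There are
at most `n ^ (3 * k)` such `X`, which already gives `|𝒢'(d)| ≤ n ^ (3 * k) · |𝒢(d)|`.
-/

open SimpleGraph
open scoped symmDiff

/-- The degree of vertex `v` in graph `G`. -/
noncomputable def deg {n : ℕ} (G : SimpleGraph (Fin n)) (v : Fin n) : ℕ :=
  (G.neighborSet v).ncard

/-- `G ∈ 𝒢(d)`: vertex `i` has degree `d i` for every `i`. -/
def memG {n : ℕ} (d : Fin n → ℕ) (G : SimpleGraph (Fin n)) : Prop :=
  ∀ v, deg G v = d v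

/-- `G ∈ 𝒢'(d)`: the degree sequence of `G` is componentwise at most `d`,
with total deficit at most `2`. -/
def memG' {n : ℕ} (d : Fin n → ℕ) (G : SimpleGraph (Fin n)) : Prop :=
  (∀ v, deg G v ≤ d v) ∧ ∑ v, (d v - deg G v) ≤ 2

/-- A single (directed) move of the Jerrum–Sinclair chain from `G` to `H`:
Type 0 (delete an edge when `G ∈ 𝒢(d)`), Type 2 (add an edge between two
deficient vertices), or Type 1 (add an edge to a deficient vertex and delete
an edge at the other endpoint). -/
def jsStep {n : ℕ} (d : Fin n → ℕ) (G H : SimpleGraph (Fin n)) : Prop :=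
  (memG d G ∧ ∃ u v : Fin n, G.Adj u v ∧ H = G.deleteEdges {s(u, v)}) ∨
  (¬ memG d G ∧ ∃ i j : Fin n, i ≠ j ∧ ¬ G.Adj i j ∧ deg G i < d i ∧ deg G j < d j ∧
      H = G ⊔ fromEdgeSet {s(i, j)}) ∨
  (¬ memG d G ∧ ∃ i j k : Fin n, i ≠ j ∧ ¬ G.Adj i j ∧ deg G i < d i ∧ deg G j = d j ∧
      G.Adj j k ∧ H = (G ⊔ fromEdgeSet {s(i, j)}).deleteEdges {s(j, k)})

/-- `G` and `H` are JS adjacent. -/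
def jsAdj {n : ℕ} (d : Fin n → ℕ) (G H : SimpleGraph (Fin n)) : Prop :=
  jsStep d G H ∨ jsStep d H G

/-- There is a walk of exactly `m` JS-adjacent steps from `G` to `H`, all of
whose states lie in `𝒢'(d)`. -/
def jsChain {n : ℕ} (d : Fin n → ℕ) (m : ℕ) (G H : SimpleGraph (Fin n)) : Prop :=
  ∃ f : ℕ → SimpleGraph (Fin n), f 0 = G ∧ f m = H ∧
    (∀ i ≤ m, memG' d (f i)) ∧ (∀ i < m, jsAdj d (f i) (f (i+1)))

/-- The JS distance between `G` and `H` (within `𝒢'(d)`) is at most `k`. -/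
def jsDistLe {n : ℕ} (d : Fin n → ℕ) (k : ℕ) (G H : SimpleGraph (Fin n)) : Prop :=
  ∃ m ≤ k, jsChain d m G H

theorem Set.ncard_image2_le {α β γ : Type*} (f : α → β → γ) {s : Set α} {t : Set β}
    (hs : s.Finite) (ht : t.Finite) : (Set.image2 f s t).ncard ≤ s.ncard * t.ncard := by
  rw [← Set.image_prod, ← Set.ncard_prod]
  exact Set.ncard_image_le (hs.prod ht)

namespace SimpleGraph

variable {V : Type*}

theorem symmDiff_adj (G H : SimpleGraph V) (a b : V) :
    (G ∆ H).Adj a b ↔ (G.Adj a b ↔ ¬ H.Adj a b) := by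
  simp only [symmDiff_def, sup_adj, sdiff_adj]
  tauto

/-- Loops are dropped: a degenerate triple contributes fewer than two edges. -/
def edgePair (p : V × V × V) : SimpleGraph V :=
  fromEdgeSet {s(p.1, p.2.1), s(p.2.1, p.2.2)}

theorem edgePair_self (v : V) : edgePair (v, v, v) = ⊥ := by
  ext a b
  simp only [edgePair, fromEdgeSet_adj, Set.mem_insert_iff, Set.mem_singleton_iff, Sym2.eq_iff,
    bot_adj]
  grind

variable (V) in
def edgePairSums : ℕ → Set (SimpleGraph V)
  | 0 => {⊥}
  | m + 1 => Set.image2 (fun p X => edgePair p ∆ X) Set.univ (edgePairSums m)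

theorem edgePairSums_mono [Nonempty V] : Monotone (edgePairSums V) := by
  refine monotone_nat_of_le_succ fun m => ?_
  induction m with
  | zero =>
    rintro _ rfl
    obtain ⟨v⟩ := ‹Nonempty V›
    exact ⟨(v, v, v), Set.mem_univ _, ⊥, rfl, by simp [edgePair_self]⟩
  | succ m ih => exact Set.image2_subset subset_rfl ih

variable (V) in
theorem ncard_edgePairSums_le [Finite V] (m : ℕ) :
    (edgePairSums V m).ncard ≤ Nat.card V ^ (3 * m) := by
  induction m with
  | zero => simp [edgePairSums]
  | succ m ih =>
    calc (edgePairSums V (m + 1)).ncard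
        ≤ (Set.univ : Set (V × V × V)).ncard * (edgePairSums V m).ncard :=
          Set.ncard_image2_le _ (Set.toFinite _) (Set.toFinite _)
      _ ≤ Nat.card V ^ 3 * Nat.card V ^ (3 * m) := by
          rw [Set.ncard_univ, Nat.card_prod, Nat.card_prod]
          exact Nat.mul_le_mul_left _ ih |>.trans_eq' (by ring)
      _ = Nat.card V ^ (3 * (m + 1)) := by ring

end SimpleGraph

variable {n : ℕ} {d : Fin n → ℕ} {G H : SimpleGraph (Fin n)}

theorem jsStep.symmDiff_eq_edgePair (h : jsStep d G H) : ∃ p, G ∆ H = edgePair p := by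
  rcases h with ⟨-, u, v, hadj, rfl⟩ | ⟨-, i, j, -, hnadj, -, -, rfl⟩ |
      ⟨-, i, j, k, -, hnadj, -, -, hadj, rfl⟩ <;>
    [use (u, v, v); use (i, j, j); use (i, j, k)] <;>
  · ext a b
    simp only [symmDiff_adj, edgePair, sup_adj, deleteEdges_adj, fromEdgeSet_adj,
      Set.mem_insert_iff, Set.mem_singleton_iff, Sym2.eq_iff]
    grind [G.adj_symm, G.ne_of_adj]

theorem jsAdj.symmDiff_eq_edgePair (h : jsAdj d G H) : ∃ p, G ∆ H = edgePair p := by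
  rcases h with h | h
  · exact h.symmDiff_eq_edgePair
  · rw [symmDiff_comm]
    exact h.symmDiff_eq_edgePair

theorem jsChain.symmDiff_mem_edgePairSums {m : ℕ} (h : jsChain d m G H) :
    G ∆ H ∈ edgePairSums (Fin n) m := by
  induction m generalizing G with
  | zero =>
    obtain ⟨f, rfl, rfl, -, -⟩ := h
    simp [edgePairSums]
  | succ m ih =>
    obtain ⟨f, rfl, rfl, hmem, hadj⟩ := h
    have htail : jsChain d m (f 1) (f (m + 1)) :=
      ⟨fun i => f (i + 1), rfl, rfl, fun i hi => hmem _ (by omega),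
        fun i hi => hadj (i + 1) (by omega)⟩
    obtain ⟨p, hp : f 0 ∆ f 1 = edgePair p⟩ := (hadj 0 m.succ_pos).symmDiff_eq_edgePair
    exact ⟨p, Set.mem_univ _, _, ih htail, show edgePair p ∆ _ = _ by
      rw [← hp, symmDiff_assoc, symmDiff_symmDiff_cancel_left]⟩

theorem stmt0_general {n : ℕ} (hn : 1 ≤ n) (d : Fin n → ℕ)
    (k : ℕ)
    (hclose : ∀ G : SimpleGraph (Fin n), memG' d G →
      ∃ H : SimpleGraph (Fin n), memG d H ∧ jsDistLe d k G H) :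
    {G : SimpleGraph (Fin n) | memG' d G}.ncard ≤
      (k + 1) * n ^ (3 * k) * {G : SimpleGraph (Fin n) | memG d G}.ncard := by
  have : Nonempty (Fin n) := ⟨⟨0, hn⟩⟩
  have hcover :
      {G | memG' d G} ⊆ Set.image2 (· ∆ ·) {H | memG d H} (edgePairSums (Fin n) k) := by
    intro G hG
    obtain ⟨H, hH, m, hmk, hchain⟩ := hclose G hG
    refine ⟨H, hH, G ∆ H, edgePairSums_mono hmk hchain.symmDiff_mem_edgePairSums, ?_⟩
    show H ∆ (G ∆ H) = G
    rw [symmDiff_comm G, symmDiff_symmDiff_cancel_left]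
  calc {G | memG' d G}.ncard
      ≤ {H | memG d H}.ncard * (edgePairSums (Fin n) k).ncard :=
        (Set.ncard_le_ncard hcover).trans
          (Set.ncard_image2_le _ (Set.toFinite _) (Set.toFinite _))
    _ ≤ {H | memG d H}.ncard * n ^ (3 * k) := by
        simpa using Nat.mul_le_mul_left _ (ncard_edgePairSums_le (Fin n) k)
    _ ≤ (k + 1) * n ^ (3 * k) * {H | memG d H}.ncard := by
        rw [mul_comm, mul_assoc]
        exact Nat.le_mul_of_pos_left _ k.succ_pos

/-- Proposition: strong stability implies P-stability, quantitative form.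
If every graph in `𝒢'(d)` is within JS distance at most `k` of some element of `𝒢(d)`,
then `|𝒢'(d)| ≤ (k+1) · n^(3k) · |𝒢(d)|`. -/
theorem stmt0 {n : ℕ} (hn : 1 ≤ n) (d : Fin n → ℕ)
    (hdpos : ∀ v, 1 ≤ d v)
    (hgraphical : ∃ H : SimpleGraph (Fin n), memG d H)
    (k : ℕ)
    (hclose : ∀ G : SimpleGraph (Fin n), memG' d G →
      ∃ H : SimpleGraph (Fin n), memG d H ∧ jsDistLe d k G H) :
    {G : SimpleGraph (Fin n) | memG' d G}.ncard ≤
      (k + 1) * n ^ (3 * k) * {G : SimpleGraph (Fin n) | memG d G}.ncard :=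
  stmt0_general hn d k hclose
end

section
/- Let d = (d_1,…,d_n) be a graphical degree sequence and let k_0 be a positive even integer. Suppose that for every graph G ∈ G''(d) \ G(d), with u its surplus-one node and v its deficit-one node, there exists in G an alternating path of even length at most k_0 from u to v, starting with an edge and ending with a co-edge. Then k_JS(d) ≤ k_0/2 + 1; that is, every graph in G'(d) can be transformed into an element of G(d) by at most k_0/2 + 1 JS-adjacent steps within G'(d). -/
open SimpleGraph
open scoped symmDiff

/-- An alternating path of length `q` from `u` to `v` in `G`: a sequence of
`q+1` distinct vertices starting at `u` and ending at `v` such that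
consecutive pairs are edges at even positions and co-edges at odd positions
(so it starts with an edge and, if `q` is even, ends with a co-edge). -/
def altPath {n : ℕ} (G : SimpleGraph (Fin n)) (u v : Fin n) (q : ℕ) : Prop :=
  ∃ w : ℕ → Fin n, w 0 = u ∧ w q = v ∧
    (∀ i j, i ≤ q → j ≤ q → w i = w j → i = j) ∧
    (∀ i < q, (Even i → G.Adj (w i) (w (i+1))) ∧ (¬ Even i → ¬ G.Adj (w i) (w (i+1))))

section Aux
variable {n : ℕ}

lemma jsChain_cons {d : Fin n → ℕ} {G G1 H : SimpleGraph (Fin n)} {m : ℕ}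
    (hG : memG' d G) (hadj : jsAdj d G G1) (h : jsChain d m G1 H) :
    jsChain d (m+1) G H := by
  obtain ⟨f, h0, hm, hmem, hstep⟩ := h
  refine ⟨fun i => if i = 0 then G else f (i-1), by simp, ?_, ?_, ?_⟩
  · simpa using hm
  · intro i hi
    by_cases h0' : i = 0
    · simpa [h0'] using hG
    · simp only [if_neg h0']
      exact hmem (i-1) (by omega)
  · intro i hi
    match i with
    | 0 =>
      simpa [h0] using hadj
    | (i+1) =>
      simp only [Nat.succ_ne_zero, if_neg, Nat.add_sub_cancel]
      exact hstep i (by omega)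

variable {n : ℕ}

lemma deg_eq_degree (G : SimpleGraph (Fin n)) [DecidableRel G.Adj] (v : Fin n) :
    deg G v = G.degree v := by
  rw [deg, SimpleGraph.degree, ← Set.ncard_coe_finset]
  congr 1
  simp [SimpleGraph.neighborFinset_def, Set.coe_toFinset]

lemma even_sum_deg (G : SimpleGraph (Fin n)) : Even (∑ v, deg G v) := by
  classical
  have h : ∑ v, deg G v = ∑ v, G.degree v :=
    Finset.sum_congr rfl fun v _ => deg_eq_degree G v
  rw [h, SimpleGraph.sum_degrees_eq_twice_card_edges]
  exact even_two_mul _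

lemma deg_lt_n (G : SimpleGraph (Fin n)) (v : Fin n) : deg G v < n := by
  classical
  rw [deg_eq_degree]
  simpa using G.degree_lt_card_verts v

lemma exists_nonneighbor (G : SimpleGraph (Fin n)) (u : Fin n) (hlt : deg G u + 1 < n) :
    ∃ x, x ≠ u ∧ ¬ G.Adj u x := by
  by_contra h
  push_neg at h
  have hset : G.neighborSet u = {u}ᶜ := by
    ext b
    simp only [mem_neighborSet, Set.mem_compl_iff, Set.mem_singleton_iff]
    exact ⟨fun ha => (G.ne_of_adj ha).symm, fun hb => h b hb⟩
  have h1 : deg G u = ({u}ᶜ : Set (Fin n)).ncard := by rw [deg, hset]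
  have h2 : ({u} : Set (Fin n)).ncard + ({u}ᶜ : Set (Fin n)).ncard = n := by
    rw [Set.ncard_add_ncard_compl]
    simp [Nat.card_eq_fintype_card]
  rw [Set.ncard_singleton] at h2
  omega

variable {G : SimpleGraph (Fin n)} {u x j k w : Fin n}

lemma adj_sup_edge (G : SimpleGraph (Fin n)) (u x a b : Fin n) :
    (G ⊔ fromEdgeSet {s(u,x)}).Adj a b ↔ G.Adj a b ∨ (s(a,b) = s(u,x) ∧ a ≠ b) := by
  simp [sup_adj, fromEdgeSet_adj]

lemma deg_sup_edge_other (hw : w ≠ u) (hw' : w ≠ x) :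
    deg (G ⊔ fromEdgeSet {s(u,x)}) w = deg G w := by
  unfold deg
  congr 1
  ext b
  simp only [mem_neighborSet, adj_sup_edge]
  constructor
  · rintro (h | ⟨he, hne⟩)
    · exact h
    · rcases Sym2.eq_iff.mp he with ⟨h1, h2⟩ | ⟨h1, h2⟩
      · exact absurd h1 hw
      · exact absurd h1 hw'
  · exact Or.inl

lemma deg_sup_edge_left (hux : u ≠ x) (hnadj : ¬ G.Adj u x) :
    deg (G ⊔ fromEdgeSet {s(u,x)}) u = deg G u + 1 := by
  have hset : (G ⊔ fromEdgeSet {s(u,x)}).neighborSet u = insert x (G.neighborSet u) := by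
    ext b
    simp only [mem_neighborSet, adj_sup_edge, Set.mem_insert_iff]
    constructor
    · rintro (h | ⟨he, hne⟩)
      · exact Or.inr h
      · rcases Sym2.eq_iff.mp he with ⟨h1, h2⟩ | ⟨h1, h2⟩
        · exact Or.inl h2
        · exact absurd h1 hux
    · rintro (rfl | h)
      · exact Or.inr ⟨rfl, hux⟩
      · exact Or.inl h
  rw [deg, hset, Set.ncard_insert_of_notMem (by simpa using hnadj)]
  rfl

lemma deg_sup_edge_right (hux : u ≠ x) (hnadj : ¬ G.Adj u x) :
    deg (G ⊔ fromEdgeSet {s(u,x)}) x = deg G x + 1 := by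
  have hswap : ({s(u,x)} : Set (Sym2 (Fin n))) = {s(x,u)} := by rw [Sym2.eq_swap]
  rw [hswap]
  exact deg_sup_edge_left (Ne.symm hux) (fun h => hnadj h.symm)

lemma deg_del_edge_other (hw : w ≠ j) (hw' : w ≠ k) :
    deg (G.deleteEdges {s(j,k)}) w = deg G w := by
  unfold deg
  congr 1
  ext b
  simp only [mem_neighborSet, deleteEdges_adj, Set.mem_singleton_iff]
  constructor
  · exact fun h => h.1
  · intro h
    refine ⟨h, fun he => ?_⟩
    rcases Sym2.eq_iff.mp he with ⟨h1, h2⟩ | ⟨h1, h2⟩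
    · exact hw h1
    · exact hw' h1

lemma deg_del_edge_left (hadj : G.Adj j k) :
    deg (G.deleteEdges {s(j,k)}) j = deg G j - 1 := by
  have hset : (G.deleteEdges {s(j,k)}).neighborSet j = G.neighborSet j \ {k} := by
    ext b
    simp only [mem_neighborSet, deleteEdges_adj, Set.mem_singleton_iff, Set.mem_diff]
    constructor
    · rintro ⟨h, hne⟩
      refine ⟨h, fun hbk => hne ?_⟩
      rw [hbk]
    · rintro ⟨h, hbk⟩
      refine ⟨h, fun he => ?_⟩
      rcases Sym2.eq_iff.mp he with ⟨h1, h2⟩ | ⟨h1, h2⟩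
      · exact hbk h2
      · exact G.ne_of_adj hadj.symm h1.symm
  rw [deg, hset, Set.ncard_diff_singleton_of_mem (by simpa using hadj)]
  rfl

lemma deg_del_edge_right (hadj : G.Adj j k) :
    deg (G.deleteEdges {s(j,k)}) k = deg G k - 1 := by
  have hswap : ({s(j,k)} : Set (Sym2 (Fin n))) = {s(k,j)} := by rw [Sym2.eq_swap]
  rw [hswap]
  exact deg_del_edge_left hadj.symm

lemma one_le_deg_of_adj (hadj : G.Adj j k) : 1 ≤ deg G k :=
  (Set.ncard_pos (Set.toFinite _)).mpr ⟨j, hadj.symm⟩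

lemma memG'_of_def {d : Fin n → ℕ} {G : SimpleGraph (Fin n)} {a b : Fin n}
    (hle : ∀ v, deg G v ≤ d v)
    (hfull : ∀ v, v ≠ a → v ≠ b → deg G v = d v)
    (hdef : (a = b ∧ deg G a + 2 = d a) ∨ (a ≠ b ∧ deg G a + 1 = d a ∧ deg G b + 1 = d b)) :
    memG' d G := by
  refine ⟨hle, ?_⟩
  have hzero : ∀ v ∈ Finset.univ, v ∉ ({a, b} : Finset (Fin n)) → d v - deg G v = 0 := by
    intro v _ hv
    simp only [Finset.mem_insert, Finset.mem_singleton] at hv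
    push_neg at hv
    have := hfull v hv.1 hv.2
    omega
  have hsum : ∑ v, (d v - deg G v) = ∑ v ∈ ({a, b} : Finset (Fin n)), (d v - deg G v) :=
    (Finset.sum_subset (Finset.subset_univ _) hzero).symm
  rw [hsum]
  rcases hdef with ⟨rfl, h2⟩ | ⟨hne, h1a, h1b⟩
  · rw [show ({a, a} : Finset (Fin n)) = {a} by simp, Finset.sum_singleton]
    omega
  · rw [Finset.sum_pair hne]
    omega

lemma notMemG_of_def {d : Fin n → ℕ} {G : SimpleGraph (Fin n)} {a b : Fin n}
    (hdef : (a = b ∧ deg G a + 2 = d a) ∨ (a ≠ b ∧ deg G a + 1 = d a ∧ deg G b + 1 = d b)) :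
    ¬ memG d G := by
  intro hm
  have := hm a
  rcases hdef with ⟨_, h2⟩ | ⟨_, h1a, _⟩ <;> omega

lemma chain_core (d : Fin n → ℕ) :
    ∀ r : ℕ, Even r → ∀ (G : SimpleGraph (Fin n)) (z : ℕ → Fin n) (a : Fin n),
    (∀ i j, i ≤ r → j ≤ r → z i = z j → i = j) →
    (∀ i < r, (Even i → G.Adj (z i) (z (i+1))) ∧ (¬ Even i → ¬ G.Adj (z i) (z (i+1)))) →
    (∀ v, deg G v ≤ d v) →
    (∀ v, v ≠ a → v ≠ z r → deg G v = d v) →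
    ((a = z r ∧ deg G a + 2 = d a) ∨
      (a ≠ z r ∧ deg G a + 1 = d a ∧ deg G (z r) + 1 = d (z r))) →
    (∀ i ≤ r, z i = a → Even i ∧ i ≠ 0) →
    ¬ G.Adj (z 0) a →
    ∃ H, memG d H ∧ jsChain d (r/2 + 1) G H := by
  intro r
  induction r using Nat.strong_induction_on with
  | _ r IH =>
  intro hre G z a hinj hpath hle hfull hdef haodd hco
  have hna0 : a ≠ z 0 := fun h => (haodd 0 (Nat.zero_le _) h.symm).2 rfl
  have hG'mem : memG' d G := memG'_of_def hle hfull hdef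
  have hnmem : ¬ memG d G := notMemG_of_def hdef
  by_cases hr0 : r = 0
  · -- base case: single Type 2 move
    subst hr0
    rcases hdef with ⟨h, _⟩ | ⟨hne, hda, hdz⟩
    · exact absurd h hna0
    set H := G ⊔ fromEdgeSet {s(a, z 0)} with hH
    have hnadj : ¬ G.Adj a (z 0) := fun h => hco h.symm
    have hmemH : memG d H := by
      intro v
      by_cases hva : v = a
      · subst hva; rw [hH, deg_sup_edge_left hne hnadj]; omega
      · by_cases hvz : v = z 0
        · subst hvz; rw [hH, deg_sup_edge_right hne hnadj]; omega
        · rw [hH, deg_sup_edge_other hva hvz]; exact hfull v hva hvz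
    refine ⟨H, hmemH, fun i => if i = 0 then G else H, by simp, by simp, ?_, ?_⟩
    · intro i hi
      by_cases h0 : i = 0
      · simpa [h0] using hG'mem
      · simp only [if_neg h0]
        refine ⟨fun v => le_of_eq (hmemH v), ?_⟩
        have : ∀ v ∈ Finset.univ, d v - deg H v = 0 := fun v _ => by have := hmemH v; omega
        rw [Finset.sum_eq_zero this]; omega
    · intro i hi
      have hi0 : i = 0 := by omega
      subst hi0
      show jsAdj d G H
      exact Or.inl (Or.inr (Or.inl ⟨hnmem, a, z 0, hne, hnadj, by omega, by omega, hH⟩))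
  · -- inductive step
    obtain ⟨r', rfl⟩ : ∃ r', r = r' + 2 := by
      rcases hre with ⟨t, ht⟩; exact ⟨r - 2, by omega⟩
    have hre' : Even r' := by
      rcases hre with ⟨t, ht⟩; exact ⟨t - 1, by omega⟩
    have hoddsucc : ¬ Even (r' + 1) := by
      rcases hre' with ⟨t, ht⟩
      simp [Nat.even_add_one, ht, parity_simps]
    set i0 := z (r' + 2) with hi0def
    set j := z (r' + 1) with hjdef
    set k := z r' with hkdef
    have hij : i0 ≠ j := fun h => by have := hinj (r'+2) (r'+1) le_rfl (by omega) h; omega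
    have hik : i0 ≠ k := fun h => by have := hinj (r'+2) r' le_rfl (by omega) h; omega
    have hjk : j ≠ k := fun h => by have := hinj (r'+1) r' (by omega) (by omega) h; omega
    have hnadjij : ¬ G.Adj i0 j := by
      intro h
      exact (hpath (r'+1) (by omega)).2 hoddsucc h.symm
    have hadjjk : G.Adj j k := ((hpath r' (by omega)).1 hre').symm
    have hja : j ≠ a := by
      intro h
      exact hoddsucc (haodd (r'+1) (by omega) h).1
    have hdegj : deg G j = d j := hfull j hja (fun h => hij h.symm)
    have hdegi0lt : deg G i0 < d i0 := by
      rcases hdef with ⟨he, h2⟩ | ⟨_, _, h1⟩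
      · rw [← he] at *; omega
      · omega
    set Gm := G ⊔ fromEdgeSet {s(i0, j)} with hGmdef
    set G1 := Gm.deleteEdges {s(j, k)} with hG1def
    have hGmi0 : deg Gm i0 = deg G i0 + 1 := deg_sup_edge_left hij hnadjij
    have hGmj : deg Gm j = deg G j + 1 := deg_sup_edge_right hij hnadjij
    have hGmadjjk : Gm.Adj j k := by exact (adj_sup_edge G i0 j j k).mpr (Or.inl hadjjk)
    have hd_i0 : deg G1 i0 = deg G i0 + 1 := by
      rw [hG1def, deg_del_edge_other (fun h => hij h) (fun h => hik h), hGmi0]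
    have hd_j : deg G1 j = deg G j := by
      rw [hG1def, deg_del_edge_left hGmadjjk, hGmj]
      omega
    have hd_k : deg G1 k = deg G k - 1 := by
      rw [hG1def, deg_del_edge_right hGmadjjk,
        deg_sup_edge_other (fun h => hik h.symm) (fun h => hjk h.symm)]
    have hd_other : ∀ v, v ≠ i0 → v ≠ j → v ≠ k → deg G1 v = deg G v := by
      intro v h1 h2 h3
      rw [hG1def, deg_del_edge_other h2 h3, deg_sup_edge_other h1 h2]
    have hkpos : 1 ≤ deg G k := one_le_deg_of_adj hadjjk
    have hstep : jsStep d G G1 :=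
      Or.inr (Or.inr ⟨hnmem, i0, j, k, hij, hnadjij, hdegi0lt, hdegj, hadjjk, rfl⟩)
    -- adjacency transfer
    have hadj_eq : ∀ s < r', (G1.Adj (z s) (z (s+1)) ↔ G.Adj (z s) (z (s+1))) := by
      intro s hs
      constructor
      · intro h
        rcases (adj_sup_edge G i0 j _ _).mp (deleteEdges_adj.mp (hG1def ▸ h)).1 with h' | ⟨he, -⟩
        · exact h'
        · exfalso
          rcases Sym2.eq_iff.mp he with ⟨h1, h2⟩ | ⟨h1, h2⟩
          · have := hinj s (r'+2) (by omega) le_rfl h1; omega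
          · have := hinj s (r'+1) (by omega) (by omega) h1; omega
      · intro h
        rw [hG1def]
        refine deleteEdges_adj.mpr ⟨(adj_sup_edge G i0 j _ _).mpr (Or.inl h), ?_⟩
        intro hmem
        rw [Set.mem_singleton_iff] at hmem
        rcases Sym2.eq_iff.mp hmem with ⟨h1, h2⟩ | ⟨h1, h2⟩
        · have := hinj s (r'+1) (by omega) (by omega) h1; omega
        · have := hinj s r' (by omega) (by omega) h1; omega
    have hmain := IH r' (by omega) hre' G1 z a
      (fun i j hi hj h => hinj i j (by omega) (by omega) h)
      (fun i hi => ⟨fun he => (hadj_eq i hi).mpr ((hpath i (by omega)).1 he),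
        fun ho h1 => (hpath i (by omega)).2 ho ((hadj_eq i hi).mp h1)⟩)
      ?_ ?_ ?_ (fun i hi h => haodd i (by omega) h) ?_
    · obtain ⟨H, hH, hchain⟩ := hmain
      refine ⟨H, hH, ?_⟩
      have heq : (r' + 2)/2 + 1 = (r'/2 + 1) + 1 := by omega
      rw [heq]
      exact jsChain_cons hG'mem (Or.inl hstep) hchain
    · -- hle for G1
      intro v
      by_cases h1 : v = i0
      · subst h1; rw [hd_i0]; omega
      · by_cases h2 : v = j
        · subst h2; rw [hd_j]; exact hle _
        · by_cases h3 : v = k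
          · subst h3; rw [hd_k]; have := hle k; omega
          · rw [hd_other v h1 h2 h3]; exact hle v
    · -- hfull for G1
      intro v hva hvk
      by_cases h1 : v = i0
      · subst h1
        rcases hdef with ⟨he, _⟩ | ⟨_, _, h1z⟩
        · exact absurd he.symm hva
        · rw [hd_i0]; omega
      · by_cases h2 : v = j
        · subst h2; rw [hd_j]; exact hdegj
        · rw [hd_other v h1 h2 hvk]
          exact hfull v hva h1
    · -- hdef for G1
      by_cases hak : a = k
      · left
        refine ⟨hak, ?_⟩
        have hazr : a ≠ z (r' + 2) := by
          intro h
          have := hinj r' (r'+2) (by omega) le_rfl (by rw [← hkdef, ← hak]; exact h)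
          omega
        rcases hdef with ⟨he, _⟩ | ⟨_, h1a, _⟩
        · exact absurd he hazr
        · have e := hd_k
          rw [hak] at h1a ⊢
          omega
      · right
        refine ⟨hak, ?_, ?_⟩
        · rcases hdef with ⟨he, h2⟩ | ⟨hne, h1a, _⟩
          · rw [he] at h2 ⊢; rw [hd_i0]; omega
          · rw [hd_other a hne hja.symm hak]; omega
        · have hka : k ≠ a := fun h => hak h.symm
          have hkzr : k ≠ z (r' + 2) := fun h => hik h.symm
          have := hfull k hka hkzr
          rw [← hkdef, hd_k]
          omega
    · -- hco for G1
      intro h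
      rcases (adj_sup_edge G i0 j _ _).mp (deleteEdges_adj.mp (hG1def ▸ h)).1 with h' | ⟨he, -⟩
      · exact hco h'
      · rcases Sym2.eq_iff.mp he with ⟨h1, h2⟩ | ⟨h1, h2⟩
        · have := hinj 0 (r'+2) (by omega) le_rfl h1; omega
        · have := hinj 0 (r'+1) (by omega) (by omega) h1; omega

end Aux

/-- Lemma A.1. If for every graph in `𝒢''(d) \ 𝒢(d)` there is
an alternating path of even length at most `k₀` from the surplus-one node to the
deficit-one node (starting with an edge, ending with a co-edge), then
`k_JS(d) ≤ k₀/2 + 1`. -/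
theorem stmt5 {n : ℕ} (d : Fin n → ℕ) (k0 : ℕ)
    (hk0pos : 0 < k0) (hk0even : Even k0)
    (hdpos : ∀ v, 1 ≤ d v)
    (hgraphical : ∃ H : SimpleGraph (Fin n), memG d H)
    (halt : ∀ (G : SimpleGraph (Fin n)) (u v : Fin n), u ≠ v →
      deg G u = d u + 1 → deg G v + 1 = d v →
      (∀ w, w ≠ u → w ≠ v → deg G w = d w) →
      ∃ q, Even q ∧ q ≤ k0 ∧ altPath G u v q) :
    ∀ G : SimpleGraph (Fin n), memG' d G →
      ∃ H : SimpleGraph (Fin n), memG d H ∧ jsDistLe d (k0 / 2 + 1) G H := by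
  intro G hG'
  by_cases hmem : memG d G
  · exact ⟨G, hmem, 0, Nat.zero_le _, fun _ => G, rfl, rfl, fun _ _ => hG',
      fun i hi => absurd hi (by omega)⟩
  have hle := hG'.1
  have hsum_eq : ∑ v, deg G v + ∑ v, (d v - deg G v) = ∑ v, d v := by
    rw [← Finset.sum_add_distrib]
    exact Finset.sum_congr rfl fun v _ => by have := hle v; omega
  have hEvend : Even (∑ v, d v) := by
    obtain ⟨H, hH⟩ := hgraphical
    have he : ∑ v, d v = ∑ v, deg H v := Finset.sum_congr rfl fun v _ => (hH v).symm
    rw [he]; exact even_sum_deg H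
  have hEvenG := even_sum_deg G
  have hS2 : ∑ v, (d v - deg G v) = 2 := by
    have h0 : ∑ v, (d v - deg G v) ≠ 0 := by
      intro h
      apply hmem
      intro v
      have h1 := Finset.sum_eq_zero_iff.mp h v (Finset.mem_univ v)
      have := hle v
      omega
    have h2 := hG'.2
    rcases hEvend with ⟨p, hp⟩
    rcases hEvenG with ⟨q, hq⟩
    omega
  obtain ⟨u, -, hcu⟩ := Finset.exists_ne_zero_of_sum_ne_zero
    (f := fun v => d v - deg G v) (by rw [hS2]; omega)
  have hsplit : (d u - deg G u) + ∑ x ∈ Finset.univ.erase u, (d x - deg G x)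
      = ∑ x, (d x - deg G x) :=
    Finset.add_sum_erase Finset.univ (fun v => d v - deg G v) (Finset.mem_univ u)
  have hdu_lt : d u < n := by
    obtain ⟨H, hH⟩ := hgraphical
    have := deg_lt_n H u
    rwa [hH u] at this
  by_cases hcu2 : d u - deg G u = 2
  · -- deficit 2 at u
    have hfull : ∀ v, v ≠ u → deg G v = d v := by
      intro v hv
      have hzero : ∑ x ∈ Finset.univ.erase u, (d x - deg G x) = 0 := by omega
      have h1 := Finset.sum_eq_zero_iff.mp hzero v
        (Finset.mem_erase.mpr ⟨hv, Finset.mem_univ v⟩)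
      have := hle v
      omega
    have hdegu : deg G u + 2 = d u := by have := hle u; omega
    obtain ⟨x, hxu, hxadj⟩ := exists_nonneighbor G u (by omega)
    have hux : u ≠ x := Ne.symm hxu
    set G2 := G ⊔ fromEdgeSet {s(u, x)} with hG2
    have hG2x : deg G2 x = d x + 1 := by
      rw [hG2, deg_sup_edge_right hux hxadj, hfull x hxu]
    have hG2u : deg G2 u + 1 = d u := by
      rw [hG2, deg_sup_edge_left hux hxadj]; omega
    have hG2other : ∀ w, w ≠ x → w ≠ u → deg G2 w = d w := by
      intro w h1 h2
      rw [hG2, deg_sup_edge_other h2 h1]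
      exact hfull w h2
    obtain ⟨q, hqe, hqk, hap⟩ := halt G2 x u hxu hG2x hG2u hG2other
    unfold altPath at hap
    obtain ⟨w, hw0, hwq, hwinj, hwpath⟩ := hap
    have hq0 : q ≠ 0 := by
      intro h
      apply hxu
      rw [← hw0, ← hwq, h]
    have hq2 : 2 ≤ q := by rcases hqe with ⟨t, ht⟩; omega
    have htrans : ∀ s < q, (G2.Adj (w s) (w (s+1)) ↔ G.Adj (w s) (w (s+1))) := by
      intro s hs
      rw [hG2, adj_sup_edge]
      constructor
      · rintro (h | ⟨he, -⟩)
        · exact h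
        · exfalso
          rcases Sym2.eq_iff.mp he with ⟨h1, h2⟩ | ⟨h1, h2⟩
          · have := hwinj s q (by omega) le_rfl (by rw [h1, ← hwq]); omega
          · have e1 := hwinj (s+1) q (by omega) le_rfl (by rw [h2, ← hwq])
            have e2 := hwinj s 0 (by omega) (by omega) (by rw [h1, ← hw0])
            omega
      · exact Or.inl
    have hpathG : ∀ i < q, (Even i → G.Adj (w i) (w (i+1))) ∧
        (¬ Even i → ¬ G.Adj (w i) (w (i+1))) := by
      intro i hi
      exact ⟨fun he => (htrans i hi).mp ((hwpath i hi).1 he),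
        fun ho hA => (hwpath i hi).2 ho ((htrans i hi).mpr hA)⟩
    obtain ⟨H, hH, hchain⟩ := chain_core d q hqe G w u hwinj hpathG hle
      (fun v hvu _ => hfull v hvu)
      (Or.inl ⟨hwq.symm, hdegu⟩)
      (fun i hi h => by
        have hiq : i = q := hwinj i q hi le_rfl (by rw [h, ← hwq])
        subst hiq
        exact ⟨hqe, hq0⟩)
      (by rw [hw0]; exact fun hA => hxadj hA.symm)
    refine ⟨H, hH, q/2 + 1, ?_, hchain⟩
    have := Nat.div_le_div_right (c := 2) hqk
    omega
  · -- two deficit-1 vertices u ≠ v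
    have hcu1 : d u - deg G u = 1 := by
      have := hle u
      have h2 := hG'.2
      have hb := Finset.single_le_sum (f := fun v => d v - deg G v)
        (fun i _ => Nat.zero_le _) (Finset.mem_univ u)
      omega
    have herase : ∑ x ∈ Finset.univ.erase u, (d x - deg G x) = 1 := by omega
    obtain ⟨v, hvmem, hv⟩ := Finset.exists_ne_zero_of_sum_ne_zero
      (f := fun x => d x - deg G x) (s := Finset.univ.erase u) (by rw [herase]; omega)
    have hvu : v ≠ u := (Finset.mem_erase.mp hvmem).1
    have hsplit2 : (d v - deg G v) + ∑ x ∈ (Finset.univ.erase u).erase v, (d x - deg G x)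
        = ∑ x ∈ Finset.univ.erase u, (d x - deg G x) :=
      Finset.add_sum_erase (Finset.univ.erase u) (fun x => d x - deg G x) hvmem
    have hvle := hle v
    have hcv1 : d v - deg G v = 1 := by omega
    have hrest : ∑ x ∈ (Finset.univ.erase u).erase v, (d x - deg G x) = 0 := by omega
    have hfull : ∀ y, y ≠ u → y ≠ v → deg G y = d y := by
      intro y h1 h2
      have hmem2 : y ∈ (Finset.univ.erase u).erase v :=
        Finset.mem_erase.mpr ⟨h2, Finset.mem_erase.mpr ⟨h1, Finset.mem_univ y⟩⟩
      have h3 := Finset.sum_eq_zero_iff.mp hrest y hmem2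
      have := hle y
      omega
    have hdegu : deg G u + 1 = d u := by have := hle u; omega
    have hdegv : deg G v + 1 = d v := by omega
    have huv : u ≠ v := Ne.symm hvu
    by_cases hadjuv : G.Adj u v
    · -- adjacent deficit pair
      obtain ⟨x, hxu, hxadj⟩ := exists_nonneighbor G u (by omega)
      have hux : u ≠ x := Ne.symm hxu
      have hxv : x ≠ v := fun h => hxadj (h ▸ hadjuv)
      set G2 := G ⊔ fromEdgeSet {s(u, x)} with hG2
      have hG2x : deg G2 x = d x + 1 := by
        rw [hG2, deg_sup_edge_right hux hxadj, hfull x hxu hxv]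
      have hG2v : deg G2 v + 1 = d v := by
        rw [hG2, deg_sup_edge_other hvu (fun h => hxv h.symm)]
        exact hdegv
      have hG2other : ∀ y, y ≠ x → y ≠ v → deg G2 y = d y := by
        intro y h1 h2
        by_cases h3 : y = u
        · subst h3; rw [hG2, deg_sup_edge_left hux hxadj]; omega
        · rw [hG2, deg_sup_edge_other h3 h1]; exact hfull y h3 h2
      obtain ⟨q, hqe, hqk, hap⟩ := halt G2 x v hxv hG2x hG2v hG2other
      unfold altPath at hap
      obtain ⟨w, hw0, hwq, hwinj, hwpath⟩ := hap
      have hq0 : q ≠ 0 := by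
        intro h
        apply hxv
        rw [← hw0, ← hwq, h]
      have hq2 : 2 ≤ q := by rcases hqe with ⟨t, ht⟩; omega
      by_cases hodd : ∃ j0, j0 < q ∧ ¬ Even j0 ∧ w j0 = u
      · -- u sits at an odd position j0: truncate the path
        obtain ⟨j0, hj0q, hj0odd, hj0w⟩ := hodd
        have hp2 : j0 % 2 = 1 := Nat.not_even_iff.mp hj0odd
        have hq2' : q % 2 = 0 := Nat.even_iff.mp hqe
        have hre : Even (q - (j0 + 1)) := Nat.even_iff.mpr (by omega)
        have htrans : ∀ s, j0 < s → s < q →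
            (G2.Adj (w s) (w (s+1)) ↔ G.Adj (w s) (w (s+1))) := by
          intro s hs1 hs2
          rw [hG2, adj_sup_edge]
          constructor
          · rintro (h | ⟨he, -⟩)
            · exact h
            · exfalso
              rcases Sym2.eq_iff.mp he with ⟨h1, h2⟩ | ⟨h1, h2⟩
              · have := hwinj s j0 (by omega) (by omega) (by rw [h1, hj0w]); omega
              · have := hwinj s 0 (by omega) (by omega) (by rw [h1, ← hw0]); omega
          · exact Or.inl
        have hzr : w (j0 + 1 + (q - (j0 + 1))) = v := by
          rw [show j0 + 1 + (q - (j0 + 1)) = q by omega, hwq]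
        obtain ⟨H, hH, hchain⟩ := chain_core d (q - (j0 + 1)) hre G
          (fun i => w (j0 + 1 + i)) u
          (fun i j hi hj h => by
            have := hwinj (j0+1+i) (j0+1+j) (by omega) (by omega) h
            omega)
          (fun i hi => by
            have hidx : j0 + 1 + i + 1 = j0 + 1 + (i + 1) := by omega
            have hIeven : Even i ↔ Even (j0 + 1 + i) := by
              rw [Nat.even_iff, Nat.even_iff]; omega
            have h1 := hwpath (j0 + 1 + i) (by omega)
            have h2 := htrans (j0 + 1 + i) (by omega) (by omega)
            constructor
            · intro he
              show G.Adj (w (j0 + 1 + i)) (w (j0 + 1 + (i + 1)))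
              rw [← hidx]
              exact h2.mp (h1.1 (hIeven.mp he))
            · intro ho hA
              have hA' : G.Adj (w (j0 + 1 + i)) (w (j0 + 1 + (i + 1))) := hA
              rw [← hidx] at hA'
              exact h1.2 (fun hc => ho (hIeven.mpr hc)) (h2.mpr hA'))
          hle
          (fun v' h1 h2 => hfull v' h1 (fun hc => h2
            (show v' = w (j0 + 1 + (q - (j0 + 1))) by rw [hc, ← hzr])))
          (Or.inr ⟨(show u ≠ w (j0 + 1 + (q - (j0 + 1))) by rw [hzr]; exact huv), hdegu,
            (show deg G (w (j0 + 1 + (q - (j0 + 1)))) + 1 = d (w (j0 + 1 + (q - (j0 + 1)))) by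
              rw [hzr]; exact hdegv)⟩)
          (fun i hi h => by
            have h' : w (j0 + 1 + i) = u := h
            exact absurd (hwinj (j0+1+i) j0 (by omega) (by omega) (by rw [h', hj0w]))
              (by omega))
          (by
            intro hA
            apply (hwpath j0 hj0q).2 hj0odd
            have hA' : G.Adj (w (j0 + 1)) u := by
              simpa using hA
            rw [← hj0w] at hA'
            rw [hG2]
            exact (adj_sup_edge G u x _ _).mpr (Or.inl hA'.symm))
        refine ⟨H, hH, (q - (j0 + 1))/2 + 1, ?_, hchain⟩
        have h1 : q - (j0 + 1) ≤ k0 := by omega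
        have := Nat.div_le_div_right (c := 2) h1
        omega
      · -- u never at an odd position: use whole path
        push_neg at hodd
        have htrans : ∀ s < q, (G2.Adj (w s) (w (s+1)) ↔ G.Adj (w s) (w (s+1))) := by
          intro s hs
          rw [hG2, adj_sup_edge]
          constructor
          · rintro (h | ⟨he, -⟩)
            · exact h
            · exfalso
              rcases Sym2.eq_iff.mp he with ⟨h1, h2⟩ | ⟨h1, h2⟩
              · have := hwinj (s+1) 0 (by omega) (by omega) (by rw [h2, ← hw0])
                omega
              · have e0 := hwinj s 0 (by omega) (by omega) (by rw [h1, ← hw0])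
                subst e0
                exact hodd 1 (by omega) (by decide) h2
          · exact Or.inl
        have hpathG : ∀ i < q, (Even i → G.Adj (w i) (w (i+1))) ∧
            (¬ Even i → ¬ G.Adj (w i) (w (i+1))) := by
          intro i hi
          exact ⟨fun he => (htrans i hi).mp ((hwpath i hi).1 he),
            fun ho hA => (hwpath i hi).2 ho ((htrans i hi).mpr hA)⟩
        obtain ⟨H, hH, hchain⟩ := chain_core d q hqe G w u hwinj hpathG hle
          (fun v' h1 h2 => hfull v' h1 (fun hc => h2 (by rw [hc, ← hwq])))
          (Or.inr ⟨(by rw [hwq]; exact huv), hdegu, (by rw [hwq]; exact hdegv)⟩)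
          (fun i hi h => by
            constructor
            · by_cases hiq : i = q
              · subst hiq; exact hqe
              · by_contra ho
                exact hodd i (by omega) ho h
            · intro h0
              subst h0
              rw [hw0] at h
              exact hxu h)
          (by rw [hw0]; exact fun hA => hxadj hA.symm)
        refine ⟨H, hH, q/2 + 1, ?_, hchain⟩
        have := Nat.div_le_div_right (c := 2) hqk
        omega
    · -- non-adjacent deficit pair: one Type 2 move
      obtain ⟨H, hH, hchain⟩ := chain_core d 0 Even.zero G (fun _ => v) u
        (fun i j hi hj _ => by omega)
        (fun i hi => absurd hi (by omega))
        hle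
        (fun v' h1 h2 => hfull v' h1 h2)
        (Or.inr ⟨huv, hdegu, hdegv⟩)
        (fun i hi h => absurd h hvu)
        (fun hA => hadjuv hA.symm)
      exact ⟨H, hH, 1, by omega, hchain⟩
end

section
/- Let (r,c) be a graphical bipartite degree sequence on parts of sizes m and n, and let δ_r, Δ_r be the minimum and maximum entries of r and δ_c, Δ_c the minimum and maximum entries of c. If (Δ_c − δ_c − 1)(Δ_r − δ_r − 1) < 1 + max{δ_c(n − Δ_r), δ_r(m − Δ_c)}, then k_JS(r,c) ≤ 8; that is, every graph in G'(r,c) can be transformed into an element of G(r,c) by at most 8 JS-adjacent steps within G'(r,c). -/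
/-- A bipartite graph on parts `{1,…,m}` and `{1,…,n}`, given by its set of
edges (each edge has one endpoint in each part). -/
abbrev BipGraph (m n : ℕ) := Finset (Fin m × Fin n)

/-- Degree of vertex `i ∈ V` (the part of size `m`). -/
def degV {m n : ℕ} (B : BipGraph m n) (i : Fin m) : ℕ :=
  (B.filter (fun e => e.1 = i)).card

/-- Degree of vertex `j ∈ U` (the part of size `n`). -/
def degU {m n : ℕ} (B : BipGraph m n) (j : Fin n) : ℕ :=
  (B.filter (fun e => e.2 = j)).card

/-- `B ∈ 𝒢(r,c)`: the vertices of `V` have degrees `r` and the vertices of `U`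
have degrees `c`. -/
def memB {m n : ℕ} (r : Fin m → ℕ) (c : Fin n → ℕ) (B : BipGraph m n) : Prop :=
  (∀ i, degV B i = r i) ∧ (∀ j, degU B j = c j)

/-- `B ∈ 𝒢'(r,c)`: either `B ∈ 𝒢(r,c)`, or there are `x ∈ V` and `y ∈ U` such
that `x` has degree `r x − 1`, `y` has degree `c y − 1`, and all other degrees
agree with `(r,c)`. -/
def memB' {m n : ℕ} (r : Fin m → ℕ) (c : Fin n → ℕ) (B : BipGraph m n) : Prop :=
  memB r c B ∨
    ∃ (x : Fin m) (y : Fin n), degV B x + 1 = r x ∧ degU B y + 1 = c y ∧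
      (∀ i, i ≠ x → degV B i = r i) ∧ (∀ j, j ≠ y → degU B j = c j)

/-- A single (directed) move of the bipartite Jerrum–Sinclair chain. -/
def bjsStep {m n : ℕ} (r : Fin m → ℕ) (c : Fin n → ℕ) (B B' : BipGraph m n) : Prop :=
  (memB r c B ∧ ∃ e ∈ B, B' = B.erase e) ∨
  (¬ memB r c B ∧ ∃ (i : Fin m) (j : Fin n), (i, j) ∉ B ∧
      degV B i < r i ∧ degU B j < c j ∧ B' = insert (i, j) B) ∨
  (¬ memB r c B ∧ ∃ (i : Fin m) (j : Fin n) (k : Fin m), (i, j) ∉ B ∧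
      degV B i < r i ∧ degU B j = c j ∧ (k, j) ∈ B ∧
      B' = (insert (i, j) B).erase (k, j))

/-- `B` and `B'` are JS adjacent. -/
def bjsAdj {m n : ℕ} (r : Fin m → ℕ) (c : Fin n → ℕ) (B B' : BipGraph m n) : Prop :=
  bjsStep r c B B' ∨ bjsStep r c B' B

/-- There is a walk of exactly `t` JS-adjacent steps from `B` to `B'`, all of
whose states lie in `𝒢'(r,c)`. -/
def bjsChain {m n : ℕ} (r : Fin m → ℕ) (c : Fin n → ℕ) (t : ℕ) (B B' : BipGraph m n) : Prop :=
  ∃ f : ℕ → BipGraph m n, f 0 = B ∧ f t = B' ∧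
    (∀ i ≤ t, memB' r c (f i)) ∧ (∀ i < t, bjsAdj r c (f i) (f (i+1)))

/-- The JS distance between `B` and `B'` (within `𝒢'(r,c)`) is at most `k`. -/
def bjsDistLe {m n : ℕ} (r : Fin m → ℕ) (c : Fin n → ℕ) (k : ℕ) (B B' : BipGraph m n) : Prop :=
  ∃ t ≤ k, bjsChain r c t B B'

/-!
Let `B ∈ 𝒢'(r,c)` have degree deficit one at `x ∈ V` and `y ∈ U`. An alternating path
`x, b, a, b', a', y` (or a shorter one) that starts and ends with a non-edge and alternates
non-edges with edges gives a repair: each interior edge `{a, b}` is used by a Type 1 move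
`+{x', b} − {a, b}` that moves the deficit from the current deficient vertex `x'` to `a`, and the
final non-edge by a Type 2 move, so at most 3 moves are needed.

If there is no such path of length 1, 3 or 5, let `W ⊆ U` be the vertices adjacent to a
non-neighbour of `y` and `K ⊆ V` those adjacent to a non-neighbour of `x`. Then `x` is adjacent to
`{y} ∪ W`, `K` to `y`, and `K × W ⊆ B`. Count the edges not meeting `{y} ∪ W`: by columns there are
at least `δ_c (n − |W| − 1)`; by rows, a row outside `N(y)` has none, a row in `N(y) \ K` has its
neighbours inside `N(x)`, and a row in `K` already meets all of `{y} ∪ W`. Together with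
`δ_r ≤ |W|` and `δ_c ≤ |K|` this gives `δ_c (n − Δ_r) < (Δ_c − δ_c − 1)(Δ_r − δ_r − 1)`, and the
same argument with `V` and `U` exchanged gives `δ_r (m − Δ_c) < (Δ_c − δ_c − 1)(Δ_r − δ_r − 1)`,
contradicting the hypothesis.
-/

open Finset

-- `s`, `t`, `c` stand for `|N(y) \ K|`, `|N(x) \ ({y} ∪ W)|` and `n − |{y} ∪ W|`.
lemma mul_sub_lt_of_count {dα Dα dβ Dβ w k s t c N : ℕ} (hw : dα ≤ w) (hk : dβ ≤ k)
    (hs : 1 ≤ s) (hx : t + w + 2 ≤ Dα) (hy : s + k + 1 ≤ Dβ) (hN : c + w + 1 = N)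
    (hcount : c * dβ + k * (w + 1) ≤ s * t + k * Dα) :
    (dβ : ℤ) * (N - Dα) < (Dβ - dβ - 1) * (Dα - dα - 1) := by
  zify at *
  nlinarith [
    mul_nonneg (by linarith : (0 : ℤ) ≤ Dβ - 1 - k - s) (by linarith : (0 : ℤ) ≤ Dα - w - 1),
    mul_nonneg (by linarith : (0 : ℤ) ≤ s) (by linarith : (0 : ℤ) ≤ Dα - w - 2 - t),
    mul_nonneg (by linarith : (0 : ℤ) ≤ Dβ - dβ - 1) (by linarith : (0 : ℤ) ≤ w - dα)]

section AltPath

variable {α β : Type*} {R : α → β → Prop} {x : α} {y : β}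

def NoShortAltPath (R : α → β → Prop) (x : α) (y : β) : Prop :=
  R x y ∧ (∀ a b, ¬R a y → R a b → R x b) ∧
    ∀ a b a' b', ¬R x b → R a b → ¬R a' y → R a' b' → R a b'

lemma NoShortAltPath.swap (h : NoShortAltPath R x y) :
    NoShortAltPath (Function.swap R) y x := by
  obtain ⟨hxy, h1, h3⟩ := h
  refine ⟨hxy, fun b a hxb hab => ?_,
    fun b a b' a' hay hab hxb' hab' => h3 a' b' a b hxb' hab' hay hab⟩
  by_contra hay
  exact hxb (h1 a b hay hab)

variable [Fintype β] [DecidableRel R]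

def nbrs (R : α → β → Prop) [DecidableRel R] (a : α) : Finset β :=
  {b | R a b}

@[simp]
lemma mem_nbrs {a : α} {b : β} : b ∈ nbrs R a ↔ R a b := by
  simp [nbrs]

variable [Fintype α]

-- For the edge relation `R`, `W = altNbrs R y` and `K = altNbrs (Function.swap R) x`; stating the
-- counting for an arbitrary relation turns the exchange of `V` and `U` into `Function.swap`.
def altNbrs (R : α → β → Prop) [DecidableRel R] (y : β) : Finset β :=
  {b | ∃ a, ¬R a y ∧ R a b}

@[simp]
lemma mem_altNbrs {b : β} : b ∈ altNbrs R y ↔ ∃ a, ¬R a y ∧ R a b := by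
  simp [altNbrs]

lemma self_notMem_altNbrs : y ∉ altNbrs R y := by
  simp

lemma nbrs_subset_altNbrs {a : α} (hay : ¬R a y) : nbrs R a ⊆ altNbrs R y :=
  fun _ hb => mem_altNbrs.2 ⟨a, hay, mem_nbrs.1 hb⟩

lemma le_card_altNbrs {δ : ℕ} (hxy : R x y) (hay : ∃ a, ¬R a y)
    (hδ : ∀ a ≠ x, δ ≤ #(nbrs R a)) : δ ≤ #(altNbrs R y) := by
  obtain ⟨a, hay⟩ := hay
  exact (hδ a (by rintro rfl; exact hay hxy)).trans (card_le_card (nbrs_subset_altNbrs hay))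

namespace NoShortAltPath

lemma rel_of_mem_altNbrs (h : NoShortAltPath R x y) {b : β} (hb : b ∈ altNbrs R y) : R x b := by
  obtain ⟨a, hay, hab⟩ := mem_altNbrs.1 hb
  exact h.2.1 a b hay hab

lemma rel_of_mem_altNbrs_of_mem_altNbrs (h : NoShortAltPath R x y) {a : α} {b : β}
    (ha : a ∈ altNbrs (Function.swap R) x) (hb : b ∈ altNbrs R y) : R a b := by
  obtain ⟨b', hxb', hab'⟩ := mem_altNbrs.1 ha
  obtain ⟨a', ha'y, ha'b⟩ := mem_altNbrs.1 hb
  exact h.2.2 a b' a' b hxb' hab' ha'y ha'b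

variable [DecidableEq α] [DecidableEq β]

theorem sum_card_nbrs_le (h : NoShortAltPath R x y) :
    ∑ b ∈ (insert y (altNbrs R y))ᶜ, #(nbrs (Function.swap R) b) +
        #(altNbrs (Function.swap R) x) * (#(altNbrs R y) + 1) ≤
      #(nbrs (Function.swap R) y \ altNbrs (Function.swap R) x) *
          #(nbrs R x \ insert y (altNbrs R y)) +
        ∑ a ∈ altNbrs (Function.swap R) x, #(nbrs R a) := by
  set W := altNbrs R y
  set K := altNbrs (Function.swap R) x
  set A := insert y W
  set S := nbrs (Function.swap R) y
  have hdouble : ∑ b ∈ Aᶜ, #(nbrs (Function.swap R) b) = ∑ a, #(nbrs R a \ A) := by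
    refine (sum_card_bipartiteAbove_eq_sum_card_bipartiteBelow (s := univ) (t := Aᶜ)
      (r := R)).symm.trans (sum_congr rfl fun a _ => congrArg card ?_)
    ext b
    simp [bipartiteAbove, and_comm]
  have hzero : ∀ a ∉ S, #(nbrs R a \ A) = 0 := fun a ha => by
    rw [card_eq_zero, sdiff_eq_empty_iff_subset]
    exact (nbrs_subset_altNbrs (by simpa [S] using ha)).trans (subset_insert y W)
  have hKS : K ⊆ S := fun a ha => by simpa [S] using h.swap.rel_of_mem_altNbrs ha
  have hout : ∀ a ∈ S \ K, #(nbrs R a \ A) ≤ #(nbrs R x \ A) := fun a ha => by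
    refine card_le_card (sdiff_subset_sdiff (fun b hb => ?_) le_rfl)
    rw [mem_nbrs] at hb ⊢
    by_contra hxb
    exact (mem_sdiff.1 ha).2 (mem_altNbrs.2 ⟨b, hxb, hb⟩)
  have hin : ∀ a ∈ K, #(nbrs R a \ A) + (#W + 1) = #(nbrs R a) := fun a ha => by
    rw [← card_insert_of_notMem self_notMem_altNbrs]
    refine card_sdiff_add_card_eq_card (insert_subset ?_ fun b hb => ?_)
    · simpa using h.swap.rel_of_mem_altNbrs ha
    · simpa using h.rel_of_mem_altNbrs_of_mem_altNbrs ha hb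
  calc ∑ b ∈ Aᶜ, #(nbrs (Function.swap R) b) + #K * (#W + 1)
      = ∑ a ∈ S \ K, #(nbrs R a \ A) + ∑ a ∈ K, (#(nbrs R a \ A) + (#W + 1)) := by
        rw [hdouble, ← sum_subset (subset_univ S) fun a _ ha => hzero a ha,
          ← sum_sdiff hKS, sum_add_distrib, sum_const, smul_eq_mul, add_assoc]
    _ ≤ #(S \ K) * #(nbrs R x \ A) + ∑ a ∈ K, #(nbrs R a) := by
        rw [sum_congr rfl hin]
        gcongr
        simpa using sum_le_card_nsmul _ _ _ hout

theorem mul_card_sub_lt (h : NoShortAltPath R x y) {δα Δα δβ Δβ : ℕ}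
    (hxb : ∃ b, ¬R x b) (hay : ∃ a, ¬R a y)
    (hδα : ∀ a ≠ x, δα ≤ #(nbrs R a)) (hΔα : ∀ a ≠ x, #(nbrs R a) ≤ Δα)
    (hΔx : #(nbrs R x) < Δα) (hδβ : ∀ b ≠ y, δβ ≤ #(nbrs (Function.swap R) b))
    (hΔy : #(nbrs (Function.swap R) y) < Δβ) :
    (δβ : ℤ) * (Fintype.card β - Δα) < (Δβ - δβ - 1) * (Δα - δα - 1) := by
  set W := altNbrs R y
  set K := altNbrs (Function.swap R) x
  set A := insert y W
  have hA : #A = #W + 1 := card_insert_of_notMem self_notMem_altNbrs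
  have hAx : #(nbrs R x \ A) + #A = #(nbrs R x) :=
    card_sdiff_add_card_eq_card (insert_subset (by simpa using h.1)
      fun b hb => by simpa using h.rel_of_mem_altNbrs hb)
  have hKy : #(nbrs (Function.swap R) y \ K) + #K = #(nbrs (Function.swap R) y) :=
    card_sdiff_add_card_eq_card fun a ha => by simpa using h.swap.rel_of_mem_altNbrs ha
  have hxK : 1 ≤ #(nbrs (Function.swap R) y \ K) :=
    card_pos.2 ⟨x, mem_sdiff.2 ⟨by simpa using h.1, self_notMem_altNbrs⟩⟩
  have hcol : #Aᶜ * δβ ≤ ∑ b ∈ Aᶜ, #(nbrs (Function.swap R) b) := by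
    simpa using card_nsmul_le_sum Aᶜ _ δβ fun b hb =>
      hδβ b fun hby => mem_compl.1 hb (hby ▸ mem_insert_self y W)
  have hrow : ∑ a ∈ K, #(nbrs R a) ≤ #K * Δα := by
    simpa using sum_le_card_nsmul K _ Δα fun a ha =>
      hΔα a fun hax => self_notMem_altNbrs (R := Function.swap R) (hax ▸ ha)
  refine mul_sub_lt_of_count (w := #W) (k := #K) (t := #(nbrs R x \ A)) (c := #Aᶜ)
    (le_card_altNbrs h.1 hay hδα) (le_card_altNbrs (R := Function.swap R) h.1 hxb hδβ)
    hxK (by omega) (by omega) (by rw [← card_compl_add_card A, hA]; ring) ?_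
  linarith [h.sum_card_nbrs_le]

theorem max_mul_card_sub_lt (h : NoShortAltPath R x y) {δα Δα δβ Δβ : ℕ}
    (hxb : ∃ b, ¬R x b) (hay : ∃ a, ¬R a y)
    (hδα : ∀ a ≠ x, δα ≤ #(nbrs R a)) (hΔα : ∀ a ≠ x, #(nbrs R a) ≤ Δα)
    (hΔx : #(nbrs R x) < Δα) (hδβ : ∀ b ≠ y, δβ ≤ #(nbrs (Function.swap R) b))
    (hΔβ : ∀ b ≠ y, #(nbrs (Function.swap R) b) ≤ Δβ) (hΔy : #(nbrs (Function.swap R) y) < Δβ) :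
    max ((δβ : ℤ) * (Fintype.card β - Δα)) ((δα : ℤ) * (Fintype.card α - Δβ)) <
      (Δβ - δβ - 1) * (Δα - δα - 1) :=
  max_lt (h.mul_card_sub_lt hxb hay hδα hΔα hΔx hδβ hΔy)
    ((h.swap.mul_card_sub_lt hay hxb hδβ hΔβ hΔy hδα hΔx).trans_eq (mul_comm _ _))

end NoShortAltPath

end AltPath

section Moves

variable {m n : ℕ} {r : Fin m → ℕ} {c : Fin n → ℕ} {B : BipGraph m n} {x k : Fin m} {y j : Fin n}

lemma degV_eq_card_nbrs (B : BipGraph m n) (i : Fin m) :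
    degV B i = #(nbrs (fun i j => (i, j) ∈ B) i) := by
  refine card_bij (fun e _ => e.2) (fun e he => ?_) (fun e he e' he' hee' => ?_) fun j hj => ?_
  all_goals simp only [nbrs, mem_filter, mem_univ, true_and] at *
  · exact he.2 ▸ he.1
  · exact Prod.ext (he.2.trans he'.2.symm) hee'
  · exact ⟨(i, j), ⟨hj, rfl⟩, rfl⟩

lemma degU_eq_card_nbrs (B : BipGraph m n) (j : Fin n) :
    degU B j = #(nbrs (Function.swap fun i j => (i, j) ∈ B) j) := by
  refine card_bij (fun e _ => e.1) (fun e he => ?_) (fun e he e' he' hee' => ?_) fun i hi => ?_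
  all_goals simp only [nbrs, Function.swap, mem_filter, mem_univ, true_and] at *
  · exact he.2 ▸ he.1
  · exact Prod.ext hee' (he.2.trans he'.2.symm)
  · exact ⟨(i, j), ⟨hi, rfl⟩, rfl⟩

lemma degV_insert {e : Fin m × Fin n} (he : e ∉ B) (i : Fin m) :
    degV (insert e B) i = degV B i + if e.1 = i then 1 else 0 := by
  unfold degV
  rw [filter_insert]
  split_ifs
  · exact card_insert_of_notMem fun h => he (mem_filter.1 h).1
  · rfl

lemma degU_insert {e : Fin m × Fin n} (he : e ∉ B) (j : Fin n) :
    degU (insert e B) j = degU B j + if e.2 = j then 1 else 0 := by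
  unfold degU
  rw [filter_insert]
  split_ifs
  · exact card_insert_of_notMem fun h => he (mem_filter.1 h).1
  · rfl

lemma degV_erase {e : Fin m × Fin n} (he : e ∈ B) (i : Fin m) :
    degV (B.erase e) i + (if e.1 = i then 1 else 0) = degV B i := by
  unfold degV
  rw [filter_erase]
  split_ifs with hi
  · exact card_erase_add_one (mem_filter.2 ⟨he, hi⟩)
  · rw [add_zero, erase_eq_of_notMem]
    simp [hi]

lemma degU_erase {e : Fin m × Fin n} (he : e ∈ B) (j : Fin n) :
    degU (B.erase e) j + (if e.2 = j then 1 else 0) = degU B j := by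
  unfold degU
  rw [filter_erase]
  split_ifs with hj
  · exact card_erase_add_one (mem_filter.2 ⟨he, hj⟩)
  · rw [add_zero, erase_eq_of_notMem]
    simp [hj]

def IsDeficientAt (r : Fin m → ℕ) (c : Fin n → ℕ) (B : BipGraph m n) (x : Fin m) (y : Fin n) :
    Prop :=
  degV B x + 1 = r x ∧ degU B y + 1 = c y ∧
    (∀ i, i ≠ x → degV B i = r i) ∧ ∀ j, j ≠ y → degU B j = c j

namespace IsDeficientAt

lemma memB' (h : IsDeficientAt r c B x y) : memB' r c B :=
  Or.inr ⟨x, y, h⟩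

lemma not_memB (h : IsDeficientAt r c B x y) : ¬memB r c B := fun hB => by
  have := hB.1 x
  have := h.1
  omega

lemma memB_insert (h : IsDeficientAt r c B x y) (hxy : (x, y) ∉ B) :
    memB r c (insert (x, y) B) := by
  obtain ⟨hx, hy, hV, hU⟩ := h
  refine ⟨fun i => ?_, fun j' => ?_⟩
  · rw [degV_insert hxy]
    by_cases hi : i = x
    · subst hi; simp [hx]
    · simp [Ne.symm hi, hV i hi]
  · rw [degU_insert hxy]
    by_cases hj : j' = y
    · subst hj; simp [hy]
    · simp [Ne.symm hj, hU j' hj]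

lemma insert_erase (h : IsDeficientAt r c B x y) (hxj : (x, j) ∉ B) (hkj : (k, j) ∈ B) :
    IsDeficientAt r c ((insert (x, j) B).erase (k, j)) k y := by
  obtain ⟨hx, hy, hV, hU⟩ := h
  have hkx : k ≠ x := by rintro rfl; exact hxj hkj
  have hV' (i : Fin m) := degV_erase (B := insert (x, j) B) (mem_insert_of_mem hkj) i
  have hU' (j' : Fin n) := degU_erase (B := insert (x, j) B) (mem_insert_of_mem hkj) j'
  simp only [degV_insert hxj, degU_insert hxj] at hV' hU'
  refine ⟨?_, ?_, fun i hi => ?_, fun j' hj' => ?_⟩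
  · have := hV' k
    rw [if_pos rfl, if_neg hkx.symm] at this
    have := hV k hkx
    omega
  · have := hU' y
    omega
  · have := hV' i
    rw [if_neg (Ne.symm hi)] at this
    by_cases hix : i = x
    · subst hix
      rw [if_pos rfl] at this
      omega
    · rw [if_neg (Ne.symm hix)] at this
      have := hV i hix
      omega
  · have := hU' j'
    have := hU j' hj'
    omega

end IsDeficientAt

end Moves

section Repairs

variable {m n : ℕ} {r : Fin m → ℕ} {c : Fin n → ℕ} {B B₁ B₂ : BipGraph m n} {x k : Fin m}
  {y j : Fin n} {t t' : ℕ}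

lemma memB.r_le (h : memB r c B) (i : Fin m) : r i ≤ n := by
  rw [← h.1 i, degV_eq_card_nbrs]
  exact (card_le_univ _).trans_eq (Fintype.card_fin n)

lemma memB.c_le (h : memB r c B) (j : Fin n) : c j ≤ m := by
  rw [← h.2 j, degU_eq_card_nbrs]
  exact (card_le_univ _).trans_eq (Fintype.card_fin m)

lemma bjsChain.cons (h : bjsChain r c t B₁ B₂) (hB : memB' r c B) (hadj : bjsAdj r c B B₁) :
    bjsChain r c (t + 1) B B₂ := by
  obtain ⟨f, hf0, hft, hmem, hadjf⟩ := h
  refine ⟨fun | 0 => B | i + 1 => f i, rfl, hft, fun i hi => ?_, fun i hi => ?_⟩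
  · cases i with
    | zero => exact hB
    | succ i => exact hmem i (by omega)
  · cases i with
    | zero => simpa [hf0] using hadj
    | succ i => exact hadjf i (by omega)

def Repairable (r : Fin m → ℕ) (c : Fin n → ℕ) (t : ℕ) (B : BipGraph m n) : Prop :=
  ∃ B', memB r c B' ∧ bjsDistLe r c t B B'

lemma Repairable.of_memB (h : memB r c B) : Repairable r c 0 B :=
  ⟨B, h, 0, le_rfl, fun _ => B, rfl, rfl, fun _ _ => Or.inl h, fun _ hi => absurd hi (by omega)⟩

lemma Repairable.mono (h : Repairable r c t B) (htt' : t ≤ t') : Repairable r c t' B :=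
  let ⟨B', hB', s, hst, hch⟩ := h
  ⟨B', hB', s, hst.trans htt', hch⟩

lemma Repairable.cons (h : Repairable r c t B₁) (hB : memB' r c B) (hadj : bjsAdj r c B B₁) :
    Repairable r c (t + 1) B :=
  let ⟨B', hB', s, hst, hch⟩ := h
  ⟨B', hB', s + 1, by omega, hch.cons hB hadj⟩

namespace IsDeficientAt

lemma repairable_one (h : IsDeficientAt r c B x y) (hxy : (x, y) ∉ B) : Repairable r c 1 B :=
  (Repairable.of_memB (h.memB_insert hxy)).cons h.memB'
    (Or.inl (Or.inr (Or.inl ⟨h.not_memB, x, y, hxy, by have := h.1; omega,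
      by have := h.2.1; omega, rfl⟩)))

lemma repairable_succ (h : IsDeficientAt r c B x y) (hxj : (x, j) ∉ B) (hkj : (k, j) ∈ B)
    (hjy : j ≠ y) (hrep : Repairable r c t ((insert (x, j) B).erase (k, j))) :
    Repairable r c (t + 1) B :=
  hrep.cons h.memB'
    (Or.inl (Or.inr (Or.inr
      ⟨h.not_memB, x, j, k, hxj, by have := h.1; omega, h.2.2.2 j hjy, hkj, rfl⟩)))

lemma repairable_two {a : Fin m} {b : Fin n} (h : IsDeficientAt r c B x y) (hxb : (x, b) ∉ B)
    (hab : (a, b) ∈ B) (hay : (a, y) ∉ B) (hby : b ≠ y) : Repairable r c 2 B :=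
  h.repairable_succ hxb hab hby
    ((h.insert_erase hxb hab).repairable_one (by simp [hay, hby.symm]))

lemma repairable_three {a a' : Fin m} {b b' : Fin n} (h : IsDeficientAt r c B x y)
    (hxb : (x, b) ∉ B) (hab : (a, b) ∈ B) (hab' : (a, b') ∉ B) (ha'b' : (a', b') ∈ B)
    (ha'y : (a', y) ∉ B) (hby : b ≠ y) : Repairable r c 3 B := by
  have hb'y : b' ≠ y := by rintro rfl; exact ha'y ha'b'
  have hb'b : b' ≠ b := by rintro rfl; exact hab' hab
  refine h.repairable_succ hxb hab hby ((h.insert_erase hxb hab).repairable_two (a := a')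
    (by simp [hab', hb'b]) (by simp [ha'b', hb'b]) ?_ hb'y)
  simp [ha'y, hby.symm]

lemma repairable_of_not_noShortAltPath (h : IsDeficientAt r c B x y)
    (hpath : ¬NoShortAltPath (fun i j => (i, j) ∈ B) x y) : Repairable r c 3 B := by
  by_cases hxy : (x, y) ∈ B
  · simp only [NoShortAltPath, hxy, true_and, not_and_or, not_forall] at hpath
    rcases hpath with ⟨a, b, hay, hab, hxb⟩ | ⟨a, b, a', b', hxb, hab, ha'y, ha'b', hab'⟩
    · exact (h.repairable_two hxb hab hay (by rintro rfl; exact hxb hxy)).mono (by norm_num)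
    · exact h.repairable_three hxb hab hab' ha'b' ha'y (by rintro rfl; exact hxb hxy)
  · exact (h.repairable_one hxy).mono (by norm_num)

lemma not_noShortAltPath (h : IsDeficientAt r c B x y) (hrx : r x ≤ n) (hcy : c y ≤ m)
    {δr Δr δc Δc : ℕ} (hδr : ∀ i, δr ≤ r i) (hΔr : ∀ i, r i ≤ Δr) (hδc : ∀ j, δc ≤ c j)
    (hΔc : ∀ j, c j ≤ Δc)
    (hineq : ((Δc : ℤ) - (δc : ℤ) - 1) * ((Δr : ℤ) - (δr : ℤ) - 1) <
      1 + max ((δc : ℤ) * ((n : ℤ) - (Δr : ℤ))) ((δr : ℤ) * ((m : ℤ) - (Δc : ℤ)))) :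
    ¬NoShortAltPath (fun i j => (i, j) ∈ B) x y := by
  obtain ⟨hx, hy, hV, hU⟩ := h
  intro hpath
  have hxb : ∃ b, (x, b) ∉ B := by
    obtain ⟨b, -, hb⟩ := exists_mem_notMem_of_card_lt_card
      (s := nbrs (fun i j => (i, j) ∈ B) x) (t := univ)
      (by rw [← degV_eq_card_nbrs, card_univ, Fintype.card_fin]; omega)
    exact ⟨b, by simpa using hb⟩
  have hay : ∃ a, (a, y) ∉ B := by
    obtain ⟨a, -, ha⟩ := exists_mem_notMem_of_card_lt_card
      (s := nbrs (Function.swap fun i j => (i, j) ∈ B) y) (t := univ)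
      (by rw [← degU_eq_card_nbrs, card_univ, Fintype.card_fin]; omega)
    exact ⟨a, by simpa using ha⟩
  have := hpath.max_mul_card_sub_lt hxb hay (δα := δr) (Δα := Δr) (δβ := δc) (Δβ := Δc)
    (fun i hi => by rw [← degV_eq_card_nbrs, hV i hi]; exact hδr i)
    (fun i hi => by rw [← degV_eq_card_nbrs, hV i hi]; exact hΔr i)
    (by rw [← degV_eq_card_nbrs]; have := hΔr x; omega)
    (fun j hj => by rw [← degU_eq_card_nbrs, hU j hj]; exact hδc j)
    (fun j hj => by rw [← degU_eq_card_nbrs, hU j hj]; exact hΔc j)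
    (by rw [← degU_eq_card_nbrs]; have := hΔc y; omega)
  simp only [Fintype.card_fin] at this
  omega

end IsDeficientAt

end Repairs

theorem stmt7_general {m n : ℕ} (r : Fin m → ℕ) (c : Fin n → ℕ) (δr Δr δc Δc : ℕ)
    (hgraphical : ∃ B : BipGraph m n, memB r c B)
    (hδr : ∀ i, δr ≤ r i)
    (hΔr : ∀ i, r i ≤ Δr)
    (hδc : ∀ j, δc ≤ c j)
    (hΔc : ∀ j, c j ≤ Δc)
    (hineq : ((Δc : ℤ) - (δc : ℤ) - 1) * ((Δr : ℤ) - (δr : ℤ) - 1) <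
      1 + max ((δc : ℤ) * ((n : ℤ) - (Δr : ℤ))) ((δr : ℤ) * ((m : ℤ) - (Δc : ℤ)))) :
    ∀ B : BipGraph m n, memB' r c B →
      ∃ B' : BipGraph m n, memB r c B' ∧ bjsDistLe r c 8 B B' := by
  obtain ⟨B₀, hB₀⟩ := hgraphical
  intro B hB
  obtain hB | ⟨x, y, hdef⟩ : memB r c B ∨ ∃ x y, IsDeficientAt r c B x y := hB
  · exact (Repairable.of_memB hB).mono (Nat.zero_le 8)
  · have hpath := hdef.not_noShortAltPath (hB₀.r_le x) (hB₀.c_le y) hδr hΔr hδc hΔc hineq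
    exact (hdef.repairable_of_not_noShortAltPath hpath).mono (by norm_num)

/-- Corollary B.3. If
`(Δ_c − δ_c − 1)(Δ_r − δ_r − 1) < 1 + max{δ_c(n − Δ_r), δ_r(m − Δ_c)}`, then
`k_JS(r,c) ≤ 8`. -/
theorem stmt7 {m n : ℕ} (r : Fin m → ℕ) (c : Fin n → ℕ) (δr Δr δc Δc : ℕ)
    (hrpos : ∀ i, 1 ≤ r i) (hcpos : ∀ j, 1 ≤ c j)
    (hgraphical : ∃ B : BipGraph m n, memB r c B)
    (hδr : ∀ i, δr ≤ r i) (hδr' : ∃ i, r i = δr)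
    (hΔr : ∀ i, r i ≤ Δr) (hΔr' : ∃ i, r i = Δr)
    (hδc : ∀ j, δc ≤ c j) (hδc' : ∃ j, c j = δc)
    (hΔc : ∀ j, c j ≤ Δc) (hΔc' : ∃ j, c j = Δc)
    (hineq : ((Δc : ℤ) - (δc : ℤ) - 1) * ((Δr : ℤ) - (δr : ℤ) - 1) <
      1 + max ((δc : ℤ) * ((n : ℤ) - (Δr : ℤ))) ((δr : ℤ) * ((m : ℤ) - (Δc : ℤ)))) :
    ∀ B : BipGraph m n, memB' r c B →
      ∃ B' : BipGraph m n, memB r c B' ∧ bjsDistLe r c 8 B B' :=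
  stmt7_general r c δr Δr δc Δc hgraphical hδr hΔr hδc hΔc hineq
end

section
/- Let d = (d_1,…,d_n) be a degree sequence and let H, H' ∈ G(d). Then there exists a sequence of graphs H = G_0, G_1, …, G_t = H' with t ≤ (1/2)·|E(H) △ E(H')|, such that every G_i belongs to G(d) and each G_{i+1} is obtained from G_i by a single switch. -/
open SimpleGraph
open scoped symmDiff

/-- A switch: replace two disjoint edges `{a,b}`, `{x,y}` of `G` by a perfect
matching on `{a,b,x,y}` none of whose edges is in `G` (both alternative
matchings are covered by the choice of the labels `x`, `y`). -/
def switchMove {n : ℕ} (G H : SimpleGraph (Fin n)) : Prop :=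
  ∃ a b x y : Fin n, a ≠ b ∧ a ≠ x ∧ a ≠ y ∧ b ≠ x ∧ b ≠ y ∧ x ≠ y ∧
    G.Adj a b ∧ G.Adj x y ∧ ¬ G.Adj a x ∧ ¬ G.Adj b y ∧
    H = (G.deleteEdges {s(a, b), s(x, y)}) ⊔ fromEdgeSet {s(a, x), s(b, y)}

/-- helper: replacing one element of a set by a new one keeps the cardinality. -/
lemma ncard_insert_diff {β : Type*} [Finite β] {A : Set β} {u w : β}
    (hu : u ∈ A) (hw : w ∉ A) : (insert w (A \ {u})).ncard = A.ncard := by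
  have h1 : w ∉ A \ {u} := fun h => hw h.1
  rw [Set.ncard_insert_of_notMem h1 (Set.toFinite _),
    Set.ncard_diff_singleton_add_one hu (Set.toFinite _)]

/-- helper: counting lemma for the symmetric difference decrease. -/
lemma count_step {β : Type*} [Finite β] {S S' : Set β} {e1 e2 e3 w : β}
    (h1 : e1 ∈ S) (h2 : e2 ∈ S) (h3 : e3 ∈ S)
    (d12 : e1 ≠ e2) (d13 : e1 ≠ e3) (d23 : e2 ≠ e3)
    (hsub : S' ⊆ (S \ {e1, e2, e3}) ∪ {w}) : S'.ncard + 2 ≤ S.ncard := by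
  have hfin : S.Finite := Set.toFinite _
  have hsub3 : ({e1, e2, e3} : Set β) ⊆ S := by
    intro z hz
    rcases hz with rfl | rfl | rfl
    exacts [h1, h2, h3]
  have hc3 : ({e1, e2, e3} : Set β).ncard = 3 := by
    rw [Set.ncard_insert_of_notMem (by simp [d12, d13]) (Set.toFinite _),
      Set.ncard_insert_of_notMem (by simp [d23]) (Set.toFinite _), Set.ncard_singleton]
  have h3S : 3 ≤ S.ncard := hc3 ▸ Set.ncard_le_ncard hsub3 hfin
  have c1 : S'.ncard ≤ ((S \ {e1, e2, e3}) ∪ {w}).ncard :=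
    Set.ncard_le_ncard hsub (Set.toFinite _)
  have c2 : ((S \ {e1, e2, e3}) ∪ {w}).ncard ≤ (S \ {e1, e2, e3}).ncard + ({w} : Set β).ncard :=
    Set.ncard_union_le _ _
  have c3 : (S \ {e1, e2, e3}).ncard = S.ncard - 3 := by
    rw [Set.ncard_diff hsub3 (Set.toFinite _), hc3]
  rw [c3, Set.ncard_singleton] at c2
  omega

section Switch

variable {n : ℕ}

/-- The result graph of a switch. -/
noncomputable def swG (G : SimpleGraph (Fin n)) (a b x y : Fin n) : SimpleGraph (Fin n) :=
  (G.deleteEdges {s(a, b), s(x, y)}) ⊔ fromEdgeSet {s(a, x), s(b, y)}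

lemma swG_adj (G : SimpleGraph (Fin n)) (a b x y u v : Fin n) :
    (swG G a b x y).Adj u v ↔
      (G.Adj u v ∧ ¬(s(u, v) = s(a, b) ∨ s(u, v) = s(x, y))) ∨
        ((s(u, v) = s(a, x) ∨ s(u, v) = s(b, y)) ∧ u ≠ v) := by
  simp [swG, deleteEdges_adj, fromEdgeSet_adj, Set.mem_insert_iff, Set.mem_singleton_iff]

lemma swG_comm1 (G : SimpleGraph (Fin n)) (a b x y : Fin n) :
    swG G a b x y = swG G b a y x := by
  unfold swG
  conv_lhs => rw [show s(a,b) = s(b,a) from Sym2.eq_swap, show s(x,y) = s(y,x) from Sym2.eq_swap,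
    Set.pair_comm (s(a,x)) (s(b,y))]

lemma swG_comm2 (G : SimpleGraph (Fin n)) (a b x y : Fin n) :
    swG G a b x y = swG G x y a b := by
  unfold swG
  conv_lhs => rw [Set.pair_comm (s(a,b)) (s(x,y)),
    show s(a,x) = s(x,a) from Sym2.eq_swap, show s(b,y) = s(y,b) from Sym2.eq_swap]

lemma swG_neighborSet_fst {G : SimpleGraph (Fin n)} {a b x y : Fin n}
    (hab : a ≠ b) (hax : a ≠ x) (hay : a ≠ y) :
    (swG G a b x y).neighborSet a = insert x (G.neighborSet a \ {b}) := by
  ext u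
  simp only [mem_neighborSet, Set.mem_insert_iff, Set.mem_diff, Set.mem_singleton_iff,
    swG_adj, Sym2.eq_iff, true_and]
  constructor
  · rintro (⟨hadj, hne⟩ | ⟨hmem, hne⟩)
    · exact Or.inr ⟨hadj, fun h => hne (Or.inl (Or.inl h))⟩
    · rcases hmem with (h | ⟨h1, _⟩) | (⟨h1, _⟩ | ⟨h1, _⟩)
      exacts [Or.inl h, absurd h1 hax, absurd h1 hab, absurd h1 hay]
  · rintro (rfl | ⟨hadj, hne⟩)
    · exact Or.inr ⟨Or.inl (Or.inl rfl), hax⟩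
    · refine Or.inl ⟨hadj, ?_⟩
      rintro ((h | ⟨h1, _⟩) | (⟨h1, _⟩ | ⟨h1, _⟩))
      exacts [hne h, hab h1, hax h1, hay h1]

lemma swG_neighborSet_other {G : SimpleGraph (Fin n)} {a b x y v : Fin n}
    (hva : v ≠ a) (hvb : v ≠ b) (hvx : v ≠ x) (hvy : v ≠ y) :
    (swG G a b x y).neighborSet v = G.neighborSet v := by
  ext u
  simp only [mem_neighborSet, swG_adj, Sym2.eq_iff]
  constructor
  · rintro (⟨hadj, _⟩ | ⟨hmem, hne⟩)
    · exact hadj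
    · rcases hmem with (⟨h1, _⟩ | ⟨h1, _⟩) | (⟨h1, _⟩ | ⟨h1, _⟩)
      exacts [absurd h1 hva, absurd h1 hvx, absurd h1 hvb, absurd h1 hvy]
  · intro hadj
    refine Or.inl ⟨hadj, ?_⟩
    rintro ((⟨h1, _⟩ | ⟨h1, _⟩) | (⟨h1, _⟩ | ⟨h1, _⟩))
    exacts [hva h1, hvb h1, hvx h1, hvy h1]

lemma swG_deg {G : SimpleGraph (Fin n)} {a b x y : Fin n}
    (hab : a ≠ b) (hax : a ≠ x) (hay : a ≠ y) (hbx : b ≠ x) (hby : b ≠ y) (hxy : x ≠ y)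
    (hGab : G.Adj a b) (hGxy : G.Adj x y) (hGax : ¬ G.Adj a x) (hGby : ¬ G.Adj b y) :
    ∀ v, deg (swG G a b x y) v = deg G v := by
  have key : ∀ (K : SimpleGraph (Fin n)) (a b x y : Fin n), a ≠ b → a ≠ x → a ≠ y →
      K.Adj a b → ¬ K.Adj a x → deg (swG K a b x y) a = deg K a := by
    intro K a b x y hab hax hay hKab hKax
    unfold deg
    rw [swG_neighborSet_fst hab hax hay]
    exact ncard_insert_diff ((K.mem_neighborSet a b).mpr hKab)
      (fun h => hKax ((K.mem_neighborSet a x).mp h))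
  intro v
  by_cases hva : v = a
  · subst hva; exact key G v b x y hab hax hay hGab hGax
  by_cases hvb : v = b
  · subst hvb
    rw [swG_comm1]
    exact key G v a y x (Ne.symm hab) hby hbx hGab.symm hGby
  by_cases hvx : v = x
  · subst hvx
    rw [swG_comm2]
    exact key G v y a b hxy (fun h => hax h.symm) (fun h => hbx h.symm) hGxy
      (fun h => hGax h.symm)
  by_cases hvy : v = y
  · subst hvy
    rw [swG_comm2, swG_comm1]
    exact key G v x b a (Ne.symm hxy) (fun h => hby h.symm) (fun h => hay h.symm) hGxy.symm
      (fun h => hGby h.symm)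
  · unfold deg
    rw [swG_neighborSet_other hva hvb hvx hvy]

lemma swG_edgeSet {G : SimpleGraph (Fin n)} {a b x y : Fin n} (hax : a ≠ x) (hby : b ≠ y) :
    (swG G a b x y).edgeSet = (G.edgeSet \ {s(a, b), s(x, y)}) ∪ {s(a, x), s(b, y)} := by
  rw [swG, edgeSet_sup, edgeSet_deleteEdges, edgeSet_fromEdgeSet]
  congr 1
  ext e
  simp only [Set.mem_diff, Set.mem_insert_iff, Set.mem_singleton_iff, Set.mem_setOf_eq,
    and_iff_left_iff_imp]
  rintro (rfl | rfl) hd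
  · exact hax (Sym2.mk_isDiag_iff.mp hd)
  · exact hby (Sym2.mk_isDiag_iff.mp hd)

end Switch

section Master

variable {n : ℕ}

lemma sym2_ne_of_ne {a b c d : Fin n} (h1 : a = c → ¬ b = d) (h2 : a = d → ¬ b = c) :
    s(a, b) ≠ s(c, d) := by
  intro h
  rcases Sym2.eq_iff.mp h with ⟨u1, u2⟩ | ⟨u1, u2⟩
  · exact h1 u1 u2
  · exact h2 u1 u2

/-- The master lemma: a switch on `G` decreasing the symmetric difference with `G'` by ≥ 2. -/
lemma master {dd : Fin n → ℕ} {G G' : SimpleGraph (Fin n)} {a b x y : Fin n}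
    (hab : a ≠ b) (hax : a ≠ x) (hay : a ≠ y) (hbx : b ≠ x) (hby : b ≠ y) (hxy : x ≠ y)
    (h1 : G.Adj a b) (h2 : G.Adj x y) (h3 : ¬ G.Adj a x) (h4 : ¬ G.Adj b y)
    (h5 : ¬ G'.Adj x y) (h6 : G'.Adj b y) (h7 : ¬ G'.Adj a b ∨ G'.Adj a x)
    (hG : memG dd G) :
    ∃ K, switchMove G K ∧ memG dd K ∧
      (K.edgeSet ∆ G'.edgeSet).ncard + 2 ≤ (G.edgeSet ∆ G'.edgeSet).ncard := by
  refine ⟨swG G a b x y, ⟨a, b, x, y, hab, hax, hay, hbx, hby, hxy, h1, h2, h3, h4, rfl⟩, ?_, ?_⟩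
  · intro v
    rw [swG_deg hab hax hay hbx hby hxy h1 h2 h3 h4 v]
    exact hG v
  -- counting
  have hKE : (swG G a b x y).edgeSet = (G.edgeSet \ {s(a, b), s(x, y)}) ∪ {s(a, x), s(b, y)} :=
    swG_edgeSet hax hby
  -- distinctness of the four edges
  have nAB_XY : s(a, b) ≠ s(x, y) := sym2_ne_of_ne (fun h _ => hax h) (fun h _ => hay h)
  have nAB_AX : s(a, b) ≠ s(a, x) := sym2_ne_of_ne (fun _ h => hbx h) (fun h _ => hax h)
  have nAB_BY : s(a, b) ≠ s(b, y) := sym2_ne_of_ne (fun h _ => hab h) (fun h _ => hay h)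
  have nXY_AX : s(x, y) ≠ s(a, x) := sym2_ne_of_ne (fun h _ => hax h.symm) (fun _ h => hay h.symm)
  have nXY_BY : s(x, y) ≠ s(b, y) := sym2_ne_of_ne (fun h _ => hbx h.symm) (fun h _ => hxy h)
  have nAX_BY : s(a, x) ≠ s(b, y) := sym2_ne_of_ne (fun h _ => hab h) (fun h _ => hay h)
  -- membership of an edge in the edge set of K
  have hmemK : ∀ e : Sym2 (Fin n), e ∈ (swG G a b x y).edgeSet ↔
      (e ∈ G.edgeSet ∧ ¬(e = s(a, b) ∨ e = s(x, y))) ∨ (e = s(a, x) ∨ e = s(b, y)) := by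
    intro e
    rw [hKE]
    simp [Set.mem_diff, Set.mem_insert_iff, Set.mem_singleton_iff, Set.mem_union]
    tauto
  have hABS : s(a, b) ∈ G.edgeSet ∆ G'.edgeSet ∨ True := Or.inr trivial
  rcases h7 with h7 | h7
  · -- removed edges: s(a,b), s(x,y), s(b,y); wildcard s(a,x)
    refine count_step (e1 := s(a, b)) (e2 := s(x, y)) (e3 := s(b, y)) (w := s(a, x))
      ?_ ?_ ?_ nAB_XY nAB_BY nXY_BY ?_
    · exact Set.mem_symmDiff.mpr (Or.inl ⟨G.mem_edgeSet.mpr h1, fun h => h7 (G'.mem_edgeSet.mp h)⟩)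
    · exact Set.mem_symmDiff.mpr (Or.inl ⟨G.mem_edgeSet.mpr h2, fun h => h5 (G'.mem_edgeSet.mp h)⟩)
    · exact Set.mem_symmDiff.mpr (Or.inr ⟨G'.mem_edgeSet.mpr h6, fun h => h4 (G.mem_edgeSet.mp h)⟩)
    · intro e he
      rcases Set.mem_symmDiff.mp he with ⟨heK, heG'⟩ | ⟨heG', heK⟩
      · -- e ∈ K, e ∉ G'
        rcases (hmemK e).mp heK with ⟨heG, hnot⟩ | (rfl | rfl)
        · refine Or.inl ⟨Set.mem_symmDiff.mpr (Or.inl ⟨heG, heG'⟩), ?_⟩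
          rintro (rfl | rfl | rfl)
          · exact hnot (Or.inl rfl)
          · exact hnot (Or.inr rfl)
          · exact heG' (G'.mem_edgeSet.mpr h6)
        · exact Or.inr rfl
        · exact heG'.elim (G'.mem_edgeSet.mpr h6)
      · -- e ∈ G', e ∉ K
        refine Or.inl ⟨Set.mem_symmDiff.mpr (Or.inr ⟨heG', fun heGmem => heK ?_⟩), ?_⟩
        · refine (hmemK e).mpr (Or.inl ⟨heGmem, ?_⟩)
          rintro (rfl | rfl)
          · exact h7 (G'.mem_edgeSet.mp heG')
          · exact h5 (G'.mem_edgeSet.mp heG')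
        · rintro (rfl | rfl | rfl)
          · exact h7 (G'.mem_edgeSet.mp heG')
          · exact h5 (G'.mem_edgeSet.mp heG')
          · exact heK ((hmemK _).mpr (Or.inr (Or.inr rfl)))
  · -- removed edges: s(x,y), s(b,y), s(a,x); wildcard s(a,b)
    refine count_step (e1 := s(x, y)) (e2 := s(b, y)) (e3 := s(a, x)) (w := s(a, b))
      ?_ ?_ ?_ nXY_BY nXY_AX (fun h => nAX_BY h.symm) ?_
    · exact Set.mem_symmDiff.mpr (Or.inl ⟨G.mem_edgeSet.mpr h2, fun h => h5 (G'.mem_edgeSet.mp h)⟩)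
    · exact Set.mem_symmDiff.mpr (Or.inr ⟨G'.mem_edgeSet.mpr h6, fun h => h4 (G.mem_edgeSet.mp h)⟩)
    · exact Set.mem_symmDiff.mpr (Or.inr ⟨G'.mem_edgeSet.mpr h7, fun h => h3 (G.mem_edgeSet.mp h)⟩)
    · intro e he
      rcases Set.mem_symmDiff.mp he with ⟨heK, heG'⟩ | ⟨heG', heK⟩
      · rcases (hmemK e).mp heK with ⟨heG, hnot⟩ | (rfl | rfl)
        · refine Or.inl ⟨Set.mem_symmDiff.mpr (Or.inl ⟨heG, heG'⟩), ?_⟩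
          rintro (rfl | rfl | rfl)
          · exact hnot (Or.inr rfl)
          · exact heG' (G'.mem_edgeSet.mpr h6)
          · exact heG' (G'.mem_edgeSet.mpr h7)
        · exact heG'.elim (G'.mem_edgeSet.mpr h7)
        · exact heG'.elim (G'.mem_edgeSet.mpr h6)
      · by_cases hw : e = s(a, b)
        · exact Or.inr hw
        refine Or.inl ⟨Set.mem_symmDiff.mpr (Or.inr ⟨heG', fun heGmem => heK ?_⟩), ?_⟩
        · refine (hmemK e).mpr (Or.inl ⟨heGmem, ?_⟩)
          rintro (rfl | rfl)
          · exact hw rfl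
          · exact h5 (G'.mem_edgeSet.mp heG')
        · rintro (rfl | rfl | rfl)
          · exact h5 (G'.mem_edgeSet.mp heG')
          · exact heK ((hmemK _).mpr (Or.inr (Or.inr rfl)))
          · exact heK ((hmemK _).mpr (Or.inr (Or.inl rfl)))

end Master

section Quad

variable {n : ℕ}

/-- The combinatorial core: if `H ≠ H'` have equal degrees, there is an
alternating path of length 3 whose endpoints are not joined by an edge of the
"wrong" colour. -/
lemma exists_good_quad {H H' : SimpleGraph (Fin n)}
    (hdeg : ∀ v, deg H v = deg H' v) (hne : H ≠ H') :
    ∃ a b c e : Fin n, a ≠ b ∧ a ≠ c ∧ a ≠ e ∧ b ≠ c ∧ b ≠ e ∧ c ≠ e ∧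
      (((H.Adj a b ∧ ¬ H'.Adj a b) ∧ (H'.Adj b c ∧ ¬ H.Adj b c) ∧ (H.Adj c e ∧ ¬ H'.Adj c e) ∧
          ¬(H.Adj a e ∧ ¬ H'.Adj a e)) ∨
        ((H'.Adj a b ∧ ¬ H.Adj a b) ∧ (H.Adj b c ∧ ¬ H'.Adj b c) ∧ (H'.Adj c e ∧ ¬ H.Adj c e) ∧
          ¬(H'.Adj a e ∧ ¬ H.Adj a e))) := by
  classical
  by_contra hcon
  have rule3 : ∀ a b c e : Fin n, a ≠ b → a ≠ c → a ≠ e → b ≠ c → b ≠ e → c ≠ e →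
      H.Adj a b → ¬ H'.Adj a b → H'.Adj b c → ¬ H.Adj b c → H.Adj c e → ¬ H'.Adj c e →
      H.Adj a e ∧ ¬ H'.Adj a e := by
    intro a b c e d1 d2 d3 d4 d5 d6 p1 p2 p3 p4 p5 p6
    by_contra hh
    exact hcon ⟨a, b, c, e, d1, d2, d3, d4, d5, d6, Or.inl ⟨⟨p1, p2⟩, ⟨p3, p4⟩, ⟨p5, p6⟩, hh⟩⟩
  have rule4 : ∀ a b c e : Fin n, a ≠ b → a ≠ c → a ≠ e → b ≠ c → b ≠ e → c ≠ e →
      H'.Adj a b → ¬ H.Adj a b → H.Adj b c → ¬ H'.Adj b c → H'.Adj c e → ¬ H.Adj c e →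
      H'.Adj a e ∧ ¬ H.Adj a e := by
    intro a b c e d1 d2 d3 d4 d5 d6 p1 p2 p3 p4 p5 p6
    by_contra hh
    exact hcon ⟨a, b, c, e, d1, d2, d3, d4, d5, d6, Or.inr ⟨⟨p1, p2⟩, ⟨p3, p4⟩, ⟨p5, p6⟩, hh⟩⟩
  clear hcon
  -- red degree = blue degree at every vertex
  have hRB : ∀ v, (H.neighborSet v \ H'.neighborSet v).ncard
      = (H'.neighborSet v \ H.neighborSet v).ncard := by
    intro v
    have h1 : (H.neighborSet v \ H'.neighborSet v).ncard
        + (H.neighborSet v ∩ H'.neighborSet v).ncard = (H.neighborSet v).ncard := by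
      rw [← Set.ncard_union_eq Set.disjoint_sdiff_inter (Set.toFinite _) (Set.toFinite _),
        Set.diff_union_inter]
    have h2 : (H'.neighborSet v \ H.neighborSet v).ncard
        + (H'.neighborSet v ∩ H.neighborSet v).ncard = (H'.neighborSet v).ncard := by
      rw [← Set.ncard_union_eq Set.disjoint_sdiff_inter (Set.toFinite _) (Set.toFinite _),
        Set.diff_union_inter]
    have h3 : (H.neighborSet v).ncard = (H'.neighborSet v).ncard := hdeg v
    rw [Set.inter_comm (H'.neighborSet v)] at h2
    omega
  -- there is a red edge
  have hex : ∃ v u, H.Adj v u ∧ ¬ H'.Adj v u := by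
    obtain ⟨ed, hed⟩ := Set.symmDiff_nonempty.mpr
      (fun hh : H.edgeSet = H'.edgeSet => hne (edgeSet_inj.mp hh))
    induction ed using Sym2.ind with
    | _ u v =>
      rcases Set.mem_symmDiff.mp hed with ⟨m1, m2⟩ | ⟨m1, m2⟩
      · exact ⟨u, v, H.mem_edgeSet.mp m1, fun h => m2 (H'.mem_edgeSet.mpr h)⟩
      · have hpos : 0 < (H'.neighborSet u \ H.neighborSet u).ncard :=
          (Set.ncard_pos (Set.toFinite _)).mpr
            ⟨v, (H'.mem_neighborSet u v).mpr (H'.mem_edgeSet.mp m1),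
              fun hmem => m2 (H.mem_edgeSet.mpr ((H.mem_neighborSet u v).mp hmem))⟩
        rw [← hRB u] at hpos
        obtain ⟨w, hw⟩ := (Set.ncard_pos (Set.toFinite _)).mp hpos
        exact ⟨u, w, (H.mem_neighborSet u w).mp hw.1,
          fun h => hw.2 ((H'.mem_neighborSet u w).mpr h)⟩
  obtain ⟨v0, u0, hv0⟩ := hex
  -- pick a vertex of maximal red degree
  obtain ⟨a, -, hmax⟩ := Finset.exists_max_image Finset.univ
    (fun v => (H.neighborSet v \ H'.neighborSet v).ncard) ⟨v0, Finset.mem_univ v0⟩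
  simp only [Finset.mem_univ, forall_const] at hmax
  have hv0mem : u0 ∈ (H.neighborSet v0 \ H'.neighborSet v0) :=
    ⟨(H.mem_neighborSet v0 u0).mpr hv0.1, fun h => hv0.2 ((H'.mem_neighborSet v0 u0).mp h)⟩
  have hfapos : 0 < (H.neighborSet a \ H'.neighborSet a).ncard :=
    lt_of_lt_of_le ((Set.ncard_pos (Set.toFinite _)).mpr ⟨u0, hv0mem⟩) (hmax v0)
  -- red neighbour b of a
  obtain ⟨b, hbmem⟩ := (Set.ncard_pos (Set.toFinite _)).mp hfapos
  have hab : H.Adj a b := (H.mem_neighborSet a b).mp hbmem.1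
  have hab' : ¬ H'.Adj a b := fun h => hbmem.2 ((H'.mem_neighborSet a b).mpr h)
  -- blue neighbour c of b
  have hrbpos : 0 < (H'.neighborSet b \ H.neighborSet b).ncard := by
    rw [← hRB b]
    exact (Set.ncard_pos (Set.toFinite _)).mpr
      ⟨a, (H.mem_neighborSet b a).mpr hab.symm,
        fun h => hab' ((H'.mem_neighborSet b a).mp h).symm⟩
  obtain ⟨c, hcmem⟩ := (Set.ncard_pos (Set.toFinite _)).mp hrbpos
  have hbc : H'.Adj b c := (H'.mem_neighborSet b c).mp hcmem.1
  have hbc' : ¬ H.Adj b c := fun h => hcmem.2 ((H.mem_neighborSet b c).mpr h)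
  -- red neighbour e0 of c
  have hrcpos : 0 < (H.neighborSet c \ H'.neighborSet c).ncard := by
    rw [hRB c]
    exact (Set.ncard_pos (Set.toFinite _)).mpr
      ⟨b, (H'.mem_neighborSet c b).mpr hbc.symm,
        fun h => hbc' ((H.mem_neighborSet c b).mp h).symm⟩
  obtain ⟨e0, hemem⟩ := (Set.ncard_pos (Set.toFinite _)).mp hrcpos
  have hce : H.Adj c e0 := (H.mem_neighborSet c e0).mp hemem.1
  have hce' : ¬ H'.Adj c e0 := fun h => hemem.2 ((H'.mem_neighborSet c e0).mpr h)
  -- basic distinctness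
  have d1 : a ≠ b := hab.ne
  have dbc : b ≠ c := hbc.ne
  have dce : c ≠ e0 := hce.ne
  have dac : a ≠ c := by intro h; subst h; exact hbc' hab.symm
  have dbe : b ≠ e0 := by intro h; subst h; exact hbc' hce.symm
  by_cases hae : a = e0
  · -- Case 1 : triangle; contradiction at the vertex b
    subst hae
    -- now hce : H.Adj c a, hce' : ¬ H'.Adj c a
    have hsub : insert c (H'.neighborSet a \ H.neighborSet a)
        ⊆ (H'.neighborSet b \ H.neighborSet b) := by
      intro u hu
      rcases hu with rfl | hu
      · exact ⟨(H'.mem_neighborSet b u).mpr hbc, fun h => hbc' ((H.mem_neighborSet b u).mp h)⟩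
      · have hu1 : H'.Adj a u := (H'.mem_neighborSet a u).mp hu.1
        have hu2 : ¬ H.Adj a u := fun h => hu.2 ((H.mem_neighborSet a u).mpr h)
        have hune : u ≠ a := hu1.ne'
        have hub : u ≠ b := by intro h; subst h; exact hu2 hab
        have huc : u ≠ c := by intro h; subst h; exact hu2 hce.symm
        have hres := rule4 u a c b hune huc hub dac d1 (Ne.symm dbc)
          hu1.symm (fun h => hu2 h.symm) hce.symm (fun h => hce' h.symm)
          hbc.symm (fun h => hbc' h.symm)
        exact ⟨(H'.mem_neighborSet b u).mpr hres.1.symm,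
          fun h => hres.2 ((H.mem_neighborSet b u).mp h).symm⟩
    have hcnot : c ∉ (H'.neighborSet a \ H.neighborSet a) :=
      fun h => h.2 ((H.mem_neighborSet a c).mpr hce.symm)
    have hcard : (H'.neighborSet a \ H.neighborSet a).ncard + 1
        ≤ (H'.neighborSet b \ H.neighborSet b).ncard := by
      rw [← Set.ncard_insert_of_notMem hcnot (Set.toFinite _)]
      exact Set.ncard_le_ncard hsub (Set.toFinite _)
    have e1 := hRB a
    have e2 := hRB b
    have e3 := hmax b
    omega
  · -- Case 2
    have hred := rule3 a b c e0 d1 dac hae dbc dbe dce hab hab' hbc hbc' hce hce'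
    by_cases hblue : H'.Adj a c ∧ ¬ H.Adj a c
    · -- Case 2b : contradiction at the vertex c
      have hsub : insert a (insert b ((H'.neighborSet a \ H.neighborSet a) \ {c}))
          ⊆ (H'.neighborSet c \ H.neighborSet c) := by
        intro u hu
        rcases hu with rfl | hu
        · exact ⟨(H'.mem_neighborSet c u).mpr hblue.1.symm,
            fun h => hblue.2 ((H.mem_neighborSet c u).mp h).symm⟩
        rcases hu with rfl | hu
        · exact ⟨(H'.mem_neighborSet c u).mpr hbc.symm,
            fun h => hbc' ((H.mem_neighborSet c u).mp h).symm⟩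
        · have hu1 : H'.Adj a u := (H'.mem_neighborSet a u).mp hu.1.1
          have hu2 : ¬ H.Adj a u := fun h => hu.1.2 ((H.mem_neighborSet a u).mpr h)
          have hune : u ≠ a := hu1.ne'
          have hub : u ≠ b := by intro h; subst h; exact hu2 hab
          have huc : u ≠ c := hu.2
          have hres := rule4 u a b c hune hub huc d1 dac dbc
            hu1.symm (fun h => hu2 h.symm) hab hab' hbc hbc'
          exact ⟨(H'.mem_neighborSet c u).mpr hres.1.symm,
            fun h => hres.2 ((H.mem_neighborSet c u).mp h).symm⟩
      have hcmem2 : c ∈ (H'.neighborSet a \ H.neighborSet a) :=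
        ⟨(H'.mem_neighborSet a c).mpr hblue.1, fun h => hblue.2 ((H.mem_neighborSet a c).mp h)⟩
      have n1 : ((H'.neighborSet a \ H.neighborSet a) \ {c}).ncard + 1
          = (H'.neighborSet a \ H.neighborSet a).ncard :=
        Set.ncard_diff_singleton_add_one hcmem2 (Set.toFinite _)
      have hbnot : b ∉ (H'.neighborSet a \ H.neighborSet a) \ {c} :=
        fun h => h.1.2 ((H.mem_neighborSet a b).mpr hab)
      have n2 : (insert b ((H'.neighborSet a \ H.neighborSet a) \ {c})).ncard
          = ((H'.neighborSet a \ H.neighborSet a) \ {c}).ncard + 1 :=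
        Set.ncard_insert_of_notMem hbnot (Set.toFinite _)
      have hanot : a ∉ insert b ((H'.neighborSet a \ H.neighborSet a) \ {c}) := by
        rintro (h | h)
        · exact d1 h
        · exact H'.irrefl ((H'.mem_neighborSet a a).mp h.1.1)
      have n3 : (insert a (insert b ((H'.neighborSet a \ H.neighborSet a) \ {c}))).ncard
          = (insert b ((H'.neighborSet a \ H.neighborSet a) \ {c})).ncard + 1 :=
        Set.ncard_insert_of_notMem hanot (Set.toFinite _)
      have hle := Set.ncard_le_ncard hsub (Set.toFinite _)
      have e1 := hRB a
      have e2 := hRB c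
      have e3 := hmax c
      omega
    · -- Case 2a : contradiction at the vertex c
      have hsub : insert b (H'.neighborSet a \ H.neighborSet a)
          ⊆ (H'.neighborSet c \ H.neighborSet c) := by
        intro u hu
        rcases hu with rfl | hu
        · exact ⟨(H'.mem_neighborSet c u).mpr hbc.symm,
            fun h => hbc' ((H.mem_neighborSet c u).mp h).symm⟩
        · have hu1 : H'.Adj a u := (H'.mem_neighborSet a u).mp hu.1
          have hu2 : ¬ H.Adj a u := fun h => hu.2 ((H.mem_neighborSet a u).mpr h)
          have hune : u ≠ a := hu1.ne'
          have hub : u ≠ b := by intro h; subst h; exact hu2 hab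
          have huc : u ≠ c := by intro h; subst h; exact hblue ⟨hu1, hu2⟩
          have hres := rule4 u a b c hune hub huc d1 dac dbc
            hu1.symm (fun h => hu2 h.symm) hab hab' hbc hbc'
          exact ⟨(H'.mem_neighborSet c u).mpr hres.1.symm,
            fun h => hres.2 ((H.mem_neighborSet c u).mp h).symm⟩
      have hbnot : b ∉ (H'.neighborSet a \ H.neighborSet a) :=
        fun h => h.2 ((H.mem_neighborSet a b).mpr hab)
      have hcard : (H'.neighborSet a \ H.neighborSet a).ncard + 1
          ≤ (H'.neighborSet c \ H.neighborSet c).ncard := by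
        rw [← Set.ncard_insert_of_notMem hbnot (Set.toFinite _)]
        exact Set.ncard_le_ncard hsub (Set.toFinite _)
      have e1 := hRB a
      have e2 := hRB c
      have e3 := hmax c
      omega

end Quad

section Steps

variable {n : ℕ}

lemma set_restore {β : Type*} (A : Set β) (d1 d2 m1 m2 : β)
    (hd1 : d1 ∈ A) (hd2 : d2 ∈ A) (hm1 : m1 ∉ A) (hm2 : m2 ∉ A) :
    ((((A \ {d1, d2}) ∪ {m1, m2}) \ {m1, m2}) ∪ {d1, d2}) = A := by
  ext z
  simp only [Set.mem_union, Set.mem_diff, Set.mem_insert_iff, Set.mem_singleton_iff]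
  constructor
  · rintro (⟨⟨hz, -⟩ | hm, hn⟩ | (rfl | rfl))
    · exact hz
    · exact absurd hm hn
    exacts [hd1, hd2]
  · intro hz
    by_cases h1 : z = d1
    · exact Or.inr (Or.inl h1)
    by_cases h2 : z = d2
    · exact Or.inr (Or.inr h2)
    refine Or.inl ⟨Or.inl ⟨hz, ?_⟩, ?_⟩
    · rintro (rfl | rfl)
      · exact h1 rfl
      · exact h2 rfl
    · rintro (rfl | rfl)
      · exact hm1 hz
      · exact hm2 hz

lemma switchMove_symm {G K : SimpleGraph (Fin n)} (h : switchMove G K) : switchMove K G := by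
  obtain ⟨a, b, x, y, hab, hax, hay, hbx, hby, hxy, h1, h2, h3, h4, hK⟩ := h
  have hK' : K = swG G a b x y := hK
  subst hK'
  have nAB_AX : s(a, b) ≠ s(a, x) := sym2_ne_of_ne (fun _ h => hbx h) (fun h _ => hax h)
  have nAB_BY : s(a, b) ≠ s(b, y) := sym2_ne_of_ne (fun h _ => hab h) (fun h _ => hay h)
  have nXY_AX : s(x, y) ≠ s(a, x) := sym2_ne_of_ne (fun h _ => hax h.symm) (fun _ h => hay h.symm)
  have nXY_BY : s(x, y) ≠ s(b, y) := sym2_ne_of_ne (fun h _ => hbx h.symm) (fun h _ => hxy h)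
  refine ⟨a, x, b, y, hax, hab, hay, Ne.symm hbx, hxy, hby, ?_, ?_, ?_, ?_, ?_⟩
  · rw [swG_adj]
    exact Or.inr ⟨Or.inl rfl, hax⟩
  · rw [swG_adj]
    exact Or.inr ⟨Or.inr rfl, hby⟩
  · rw [swG_adj]
    rintro (⟨-, hne⟩ | ⟨hmem, -⟩)
    · exact hne (Or.inl rfl)
    · rcases hmem with hm | hm
      · exact nAB_AX hm
      · exact nAB_BY hm
  · rw [swG_adj]
    rintro (⟨-, hne⟩ | ⟨hmem, -⟩)
    · exact hne (Or.inr rfl)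
    · rcases hmem with hm | hm
      · exact nXY_AX hm
      · exact nXY_BY hm
  · show G = swG (swG G a b x y) a x b y
    apply edgeSet_inj.mp
    rw [swG_edgeSet hab hxy, swG_edgeSet hax hby]
    exact (set_restore G.edgeSet s(a, b) s(x, y) s(a, x) s(b, y)
      (G.mem_edgeSet.mpr h1) (G.mem_edgeSet.mpr h2)
      (fun h => h3 (G.mem_edgeSet.mp h)) (fun h => h4 (G.mem_edgeSet.mp h))).symm

open scoped symmDiff in
lemma key_step {d : Fin n → ℕ} {H H' : SimpleGraph (Fin n)}
    (hH : memG d H) (hH' : memG d H') (hne : H ≠ H') :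
    (∃ K, switchMove H K ∧ memG d K ∧
      (K.edgeSet ∆ H'.edgeSet).ncard + 2 ≤ (H.edgeSet ∆ H'.edgeSet).ncard) ∨
    (∃ K, switchMove H' K ∧ memG d K ∧
      (H.edgeSet ∆ K.edgeSet).ncard + 2 ≤ (H.edgeSet ∆ H'.edgeSet).ncard) := by
  have hdeg : ∀ v, deg H v = deg H' v := fun v => (hH v).trans (hH' v).symm
  obtain ⟨a, b, c, e, d1, d2, d3, d4, d5, d6, hq⟩ := exists_good_quad hdeg hne
  rcases hq with ⟨hab, hbc, hce, hnred⟩ | ⟨hab, hbc, hce, hnblue⟩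
  · -- red-blue-red path a b c e
    by_cases hHae : H.Adj a e
    · -- chord in both graphs: switch on H'
      have hH'ae : H'.Adj a e := by by_contra hcon; exact hnred ⟨hHae, hcon⟩
      obtain ⟨K, hsw, hmem, hcount⟩ := master (dd := d) (G := H') (G' := H)
        (a := a) (b := e) (x := b) (y := c) d3 d1 d2 (Ne.symm d5) (Ne.symm d6) d4
        hH'ae hbc.1 hab.2 (fun h => hce.2 h.symm) hbc.2 hce.1.symm (Or.inr hab.1) hH'
      exact Or.inr ⟨K, hsw, hmem, by
        rwa [symmDiff_comm K.edgeSet, symmDiff_comm H'.edgeSet] at hcount⟩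
    · -- switch on H
      obtain ⟨K, hsw, hmem, hcount⟩ := master (dd := d) (G := H) (G' := H')
        (a := a) (b := b) (x := e) (y := c) d1 d3 d2 d5 d4 (Ne.symm d6)
        hab.1 hce.1.symm hHae hbc.2 (fun h => hce.2 h.symm) hbc.1 (Or.inl hab.2) hH
      exact Or.inl ⟨K, hsw, hmem, hcount⟩
  · -- blue-red-blue path a b c e
    by_cases hH'ae : H'.Adj a e
    · have hHae : H.Adj a e := by by_contra hcon; exact hnblue ⟨hH'ae, hcon⟩
      obtain ⟨K, hsw, hmem, hcount⟩ := master (dd := d) (G := H) (G' := H')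
        (a := a) (b := e) (x := b) (y := c) d3 d1 d2 (Ne.symm d5) (Ne.symm d6) d4
        hHae hbc.1 hab.2 (fun h => hce.2 h.symm) hbc.2 hce.1.symm (Or.inr hab.1) hH
      exact Or.inl ⟨K, hsw, hmem, hcount⟩
    · obtain ⟨K, hsw, hmem, hcount⟩ := master (dd := d) (G := H') (G' := H)
        (a := a) (b := b) (x := e) (y := c) d1 d3 d2 d5 d4 (Ne.symm d6)
        hab.1 hce.1.symm hH'ae hbc.2 (fun h => hce.2 h.symm) hbc.1 (Or.inl hab.2) hH'
      exact Or.inr ⟨K, hsw, hmem, by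
        rwa [symmDiff_comm K.edgeSet, symmDiff_comm H'.edgeSet] at hcount⟩

end Steps

theorem stmt8' {n : ℕ} (d : Fin n → ℕ)
    (H H' : SimpleGraph (Fin n)) (hH : memG d H) (hH' : memG d H') :
    ∃ t : ℕ, 2 * t ≤ (H.edgeSet ∆ H'.edgeSet).ncard ∧
      ∃ f : ℕ → SimpleGraph (Fin n), f 0 = H ∧ f t = H' ∧
        (∀ i ≤ t, memG d (f i)) ∧ (∀ i < t, switchMove (f i) (f (i+1))) := by
  suffices h : ∀ N (H H' : SimpleGraph (Fin n)), memG d H → memG d H' →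
      (H.edgeSet ∆ H'.edgeSet).ncard ≤ N →
      ∃ t : ℕ, 2 * t ≤ (H.edgeSet ∆ H'.edgeSet).ncard ∧
        ∃ f : ℕ → SimpleGraph (Fin n), f 0 = H ∧ f t = H' ∧
          (∀ i ≤ t, memG d (f i)) ∧ (∀ i < t, switchMove (f i) (f (i+1))) by
    exact h _ H H' hH hH' le_rfl
  intro N
  induction N with
  | zero =>
    intro H H' hH hH' hle
    have hEq : H = H' := by
      by_contra hne
      obtain ⟨ed, hed⟩ := Set.symmDiff_nonempty.mpr
        (fun hh : H.edgeSet = H'.edgeSet => hne (edgeSet_inj.mp hh))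
      have h0 : (H.edgeSet ∆ H'.edgeSet) = ∅ :=
        (Set.ncard_eq_zero (Set.toFinite _)).mp (Nat.le_zero.mp hle)
      rw [h0] at hed
      exact hed
    subst hEq
    exact ⟨0, Nat.zero_le _, fun _ => H, rfl, rfl, fun i _ => hH,
      fun i h => absurd h (Nat.not_lt_zero i)⟩
  | succ N ih =>
    intro H H' hH hH' hle
    by_cases hne : H = H'
    · subst hne
      exact ⟨0, Nat.zero_le _, fun _ => H, rfl, rfl, fun i _ => hH,
        fun i h => absurd h (Nat.not_lt_zero i)⟩
    rcases key_step hH hH' hne with ⟨K, hsw, hK, hcount⟩ | ⟨K, hsw, hK, hcount⟩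
    · -- first move from H
      have hKle : (K.edgeSet ∆ H'.edgeSet).ncard ≤ N := by omega
      obtain ⟨t, ht, f, hf0, hft, hfm, hfs⟩ := ih K H' hK hH' hKle
      refine ⟨t + 1, by omega, fun i => if i = 0 then H else f (i - 1), by simp, ?_, ?_, ?_⟩
      · simp only [Nat.succ_ne_zero, if_neg, Nat.add_sub_cancel]
        exact hft
      · intro i hi
        by_cases h0 : i = 0
        · subst h0; simpa using hH
        · obtain ⟨j, rfl⟩ := Nat.exists_eq_succ_of_ne_zero h0
          simp only [Nat.succ_ne_zero, if_neg, Nat.succ_sub_one]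
          exact hfm j (by omega)
      · intro i hi
        by_cases h0 : i = 0
        · subst h0
          simp only [if_pos rfl, Nat.one_ne_zero, if_neg, Nat.sub_self]
          rw [hf0]
          exact hsw
        · obtain ⟨j, rfl⟩ := Nat.exists_eq_succ_of_ne_zero h0
          simp only [Nat.succ_ne_zero, if_neg, Nat.succ_sub_one]
          exact hfs j (by omega)
    · -- last move into H'
      have hKle : (H.edgeSet ∆ K.edgeSet).ncard ≤ N := by omega
      obtain ⟨t, ht, f, hf0, hft, hfm, hfs⟩ := ih H K hH hK hKle
      refine ⟨t + 1, by omega, fun i => if i ≤ t then f i else H', by simp [hf0], ?_, ?_, ?_⟩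
      · beta_reduce
        rw [if_neg (by omega : ¬ t + 1 ≤ t)]
      · intro i hi
        beta_reduce
        by_cases h : i ≤ t
        · rw [if_pos h]; exact hfm i h
        · rw [if_neg h]; exact hH'
      · intro i hi
        beta_reduce
        by_cases h : i < t
        · rw [if_pos (by omega : i ≤ t), if_pos (by omega : i + 1 ≤ t)]
          exact hfs i h
        · have hit : i = t := by omega
          subst hit
          rw [if_pos le_rfl, if_neg (by omega : ¬ i + 1 ≤ i), hft]
          exact switchMove_symm hsw

/-- Theorem 3.6, after Erdős–Király–Miklós. Any two graphs
`H, H' ∈ 𝒢(d)` are connected, within `𝒢(d)`, by a sequence of at most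
`|E(H) △ E(H')| / 2` switches. -/
theorem stmt8 {n : ℕ} (d : Fin n → ℕ) (hdpos : ∀ v, 1 ≤ d v)
    (H H' : SimpleGraph (Fin n)) (hH : memG d H) (hH' : memG d H') :
    ∃ t : ℕ, 2 * t ≤ (H.edgeSet ∆ H'.edgeSet).ncard ∧
      ∃ f : ℕ → SimpleGraph (Fin n), f 0 = H ∧ f t = H' ∧
        (∀ i ≤ t, memG d (f i)) ∧ (∀ i < t, switchMove (f i) (f (i+1))) := by
  exact stmt8' d H H' hH hH'
end

section
/- For every {a,b}-mountain P with first top t, there exists a traversal of P. -/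
/-!
Consider the graph whose vertices are the pairs `(i, j) ∈ [a, t] × [t, b]` with
`P i + P j = P t`, two pairs being adjacent when both coordinates move by one. As `P` moves by one
at each step, a neighbour of `(i, j)` moves `P i` up and `P j` down or conversely, so the degree of
`(i, j)` is `u₁ d₂ + d₁ u₂`, where `uₖ` and `dₖ` count the neighbours of the `k`-th coordinate at
which `P` goes up and down. For two interior coordinates `u₁ + d₁ = u₂ + d₂ = 2`, which makes the
degree even; at the boundary, `(a, t)` has degree one and `(t, b)` is the only other candidate for
an odd degree. By the handshake lemma in the component of `(a, t)`, this component contains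
`(t, b)`, and a walk from `(a, t)` to `(t, b)` is a traversal.
-/

open Finset

namespace SimpleGraph

variable {V : Type*} (G : SimpleGraph V)

def restrictReachable (v : V) : SimpleGraph V where
  Adj u w := G.Adj u w ∧ G.Reachable v u
  symm := ⟨fun _ _ h => ⟨h.1.symm, h.2.trans h.1.reachable⟩⟩
  loopless := ⟨fun _ h => G.loopless.irrefl _ h.1⟩

lemma neighborSet_restrictReachable {v u : V} (h : G.Reachable v u) :
    (G.restrictReachable v).neighborSet u = G.neighborSet u := by
  ext w
  exact and_iff_left h

variable [Fintype V] [DecidableRel G.Adj]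

theorem exists_reachable_ne_odd_degree {v : V} (hv : Odd (G.degree v)) :
    ∃ w ≠ v, G.Reachable v w ∧ Odd (G.degree w) := by
  classical
  set H := G.restrictReachable v
  have hdeg : ∀ u, G.Reachable v u → H.degree u = G.degree u := fun u hu => by
    rw [← card_neighborSet_eq_degree, ← card_neighborSet_eq_degree]
    exact Fintype.card_congr (Equiv.setCongr (G.neighborSet_restrictReachable hu))
  obtain ⟨w, hwv, hw⟩ := H.exists_ne_odd_degree_of_exists_odd_degree v
    (by rwa [hdeg v (Reachable.refl v)])
  obtain ⟨_, hx⟩ := H.degree_pos_iff_exists_adj w |>.mp hw.pos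
  have hvw : G.Reachable v w := hx.2
  exact ⟨w, hwv, hvw, hdeg w hvw ▸ hw⟩

end SimpleGraph

lemma Nat.even_mul_add_mul {x y z w : ℕ} (hxy : Even (x + y)) (hzw : Even (z + w)) :
    Even (x * w + y * z) := by
  rw [Nat.even_add] at hxy hzw ⊢
  rw [Nat.even_mul, Nat.even_mul]
  tauto

def HasUnitSteps (P : ℤ → ℤ) (lo hi : ℤ) : Prop :=
  ∀ i, lo ≤ i → i < hi → |P (i + 1) - P i| = 1

noncomputable def stepNeighbors (P : ℤ → ℤ) (lo hi d i : ℤ) : Finset ℤ :=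
  {x ∈ Icc lo hi | |x - i| = 1 ∧ P x = P i + d}

section StepNeighbors

variable {P : ℤ → ℤ} {lo hi : ℤ}

lemma HasUnitSteps.mono {lo' hi' : ℤ} (h : HasUnitSteps P lo hi) (hlo : lo ≤ lo')
    (hhi : hi' ≤ hi) : HasUnitSteps P lo' hi' :=
  fun i h₁ h₂ => h i (hlo.trans h₁) (h₂.trans_le hhi)

lemma HasUnitSteps.abs_sub_eq_one {x i : ℤ} (h : HasUnitSteps P lo hi) (hx : x ∈ Icc lo hi)
    (hmem : i ∈ Icc lo hi) (hxi : |x - i| = 1) : |P x - P i| = 1 := by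
  rw [mem_Icc] at hx hmem
  rcases (abs_eq zero_le_one).mp hxi with hxi | hxi
  · obtain rfl : x = i + 1 := by omega
    exact h i hmem.1 (by omega)
  · obtain rfl : i = x + 1 := by omega
    rw [abs_sub_comm]
    exact h x hx.1 (by omega)

lemma stepNeighbors_eq_empty {d i : ℤ} (h : ∀ x, lo ≤ x → x ≤ hi → P x ≠ P i + d) :
    stepNeighbors P lo hi d i = ∅ := by
  simp only [stepNeighbors, filter_eq_empty_iff, mem_Icc]
  exact fun x hx hx' => h x hx.1 hx.2 hx'.2

lemma card_stepNeighbors_add_card_stepNeighbors {i : ℤ} (h : HasUnitSteps P lo hi)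
    (hmem : i ∈ Icc lo hi) :
    #(stepNeighbors P lo hi 1 i) + #(stepNeighbors P lo hi (-1) i) =
      #{x ∈ Icc lo hi | |x - i| = 1} := by
  rw [← card_union_of_disjoint]
  · congr 1
    ext x
    simp only [stepNeighbors, mem_union, mem_filter]
    constructor
    · rintro (⟨hx, hxi, -⟩ | ⟨hx, hxi, -⟩) <;> exact ⟨hx, hxi⟩
    · rintro ⟨hx, hxi⟩
      rcases (abs_eq zero_le_one).mp (h.abs_sub_eq_one hx hmem hxi) with hPx | hPx
      · exact Or.inl ⟨hx, hxi, by omega⟩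
      · exact Or.inr ⟨hx, hxi, by omega⟩
  · rw [disjoint_left]
    simp only [stepNeighbors, mem_filter]
    omega

lemma filter_abs_sub_eq_one_of_mem_Ioo {i : ℤ} (hmem : i ∈ Ioo lo hi) :
    ({x ∈ Icc lo hi | |x - i| = 1} : Finset ℤ) = {i - 1, i + 1} := by
  rw [mem_Ioo] at hmem
  ext x
  simp only [mem_filter, mem_Icc, mem_insert, mem_singleton, abs_eq zero_le_one]
  omega

lemma filter_abs_sub_eq_one_left (h : lo < hi) :
    ({x ∈ Icc lo hi | |x - lo| = 1} : Finset ℤ) = {lo + 1} := by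
  ext x
  simp only [mem_filter, mem_Icc, mem_singleton, abs_eq zero_le_one]
  omega

lemma card_stepNeighbors_add_card_stepNeighbors_of_mem_Ioo {i : ℤ} (h : HasUnitSteps P lo hi)
    (hmem : i ∈ Ioo lo hi) :
    #(stepNeighbors P lo hi 1 i) + #(stepNeighbors P lo hi (-1) i) = 2 := by
  rw [card_stepNeighbors_add_card_stepNeighbors h (Ioo_subset_Icc_self hmem),
    filter_abs_sub_eq_one_of_mem_Ioo hmem, card_pair]
  omega

lemma card_stepNeighbors_add_card_stepNeighbors_left (h : HasUnitSteps P lo hi)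
    (hlt : lo < hi) :
    #(stepNeighbors P lo hi 1 lo) + #(stepNeighbors P lo hi (-1) lo) = 1 := by
  rw [card_stepNeighbors_add_card_stepNeighbors h (left_mem_Icc.mpr hlt.le),
    filter_abs_sub_eq_one_left hlt, card_singleton]

end StepNeighbors

def diagStepGraph (S : Finset (ℤ × ℤ)) : SimpleGraph S where
  Adj p q := |p.1.1 - q.1.1| = 1 ∧ |p.1.2 - q.1.2| = 1
  symm := ⟨fun _ _ h => ⟨by rw [abs_sub_comm]; exact h.1, by rw [abs_sub_comm]; exact h.2⟩⟩
  loopless := ⟨fun _ h => by simp at h⟩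

instance (S : Finset (ℤ × ℤ)) : DecidableRel (diagStepGraph S).Adj :=
  fun _ _ => instDecidableAnd

lemma degree_diagStepGraph (S : Finset (ℤ × ℤ)) (p : S) :
    (diagStepGraph S).degree p = #{q ∈ S | |p.1.1 - q.1| = 1 ∧ |p.1.2 - q.2| = 1} := by
  rw [← SimpleGraph.card_neighborFinset_eq_degree]
  refine card_bij (fun q _ => q.1) (fun q hq => ?_) (fun _ _ _ _ => Subtype.ext)
    (fun q hq => ?_)
  · exact mem_filter.mpr ⟨q.2, (SimpleGraph.mem_neighborFinset _ _ _).mp hq⟩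
  · obtain ⟨hqS, hadj⟩ := mem_filter.mp hq
    exact ⟨⟨q, hqS⟩, (SimpleGraph.mem_neighborFinset _ _ _).mpr hadj, rfl⟩

noncomputable def levelPairs (P : ℤ → ℤ) (a b t : ℤ) : Finset (ℤ × ℤ) :=
  {p ∈ Icc a t ×ˢ Icc t b | P p.1 + P p.2 = P t}

noncomputable abbrev levelGraph (P : ℤ → ℤ) (a b t : ℤ) : SimpleGraph (levelPairs P a b t) :=
  diagStepGraph (levelPairs P a b t)

section LevelGraph

variable {P : ℤ → ℤ} {a b t : ℤ}

lemma mem_levelPairs {p : ℤ × ℤ} :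
    p ∈ levelPairs P a b t ↔ a ≤ p.1 ∧ p.1 ≤ t ∧ t ≤ p.2 ∧ p.2 ≤ b ∧ P p.1 + P p.2 = P t := by
  simp only [levelPairs, mem_filter, mem_product, mem_Icc, and_assoc]

lemma filter_adj_levelPairs {i j : ℤ} (h : HasUnitSteps P a t)
    (hij : (i, j) ∈ levelPairs P a b t) :
    {q ∈ levelPairs P a b t | |i - q.1| = 1 ∧ |j - q.2| = 1} =
      stepNeighbors P a t 1 i ×ˢ stepNeighbors P t b (-1) j ∪
        stepNeighbors P a t (-1) i ×ˢ stepNeighbors P t b 1 j := by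
  simp only [levelPairs, mem_filter, mem_product] at hij
  obtain ⟨⟨hi, hj⟩, hsum⟩ := hij
  ext ⟨x, y⟩
  simp only [levelPairs, stepNeighbors, mem_filter, mem_product, mem_union]
  rw [abs_sub_comm i, abs_sub_comm j]
  constructor
  · rintro ⟨⟨⟨hx, hy⟩, hxy⟩, hxi, hyj⟩
    rcases (abs_eq zero_le_one).mp (h.abs_sub_eq_one hx hi hxi) with hPx | hPx
    · exact Or.inl ⟨⟨hx, hxi, by omega⟩, hy, hyj, by omega⟩
    · exact Or.inr ⟨⟨hx, hxi, by omega⟩, hy, hyj, by omega⟩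
  · rintro (⟨⟨hx, hxi, hPx⟩, ⟨hy, hyj, hPy⟩⟩ | ⟨⟨hx, hxi, hPx⟩, ⟨hy, hyj, hPy⟩⟩) <;>
      exact ⟨⟨⟨hx, hy⟩, by omega⟩, hxi, hyj⟩

lemma degree_levelGraph {i j : ℤ} (h : HasUnitSteps P a t) (hij : (i, j) ∈ levelPairs P a b t) :
    (levelGraph P a b t).degree ⟨(i, j), hij⟩ =
      #(stepNeighbors P a t 1 i) * #(stepNeighbors P t b (-1) j) +
        #(stepNeighbors P a t (-1) i) * #(stepNeighbors P t b 1 j) := by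
  rw [degree_diagStepGraph, filter_adj_levelPairs h hij, card_union_of_disjoint,
    card_product, card_product]
  rw [disjoint_left]
  rintro ⟨x, y⟩ hup hdown
  simp only [stepNeighbors, mem_product, mem_filter] at hup hdown
  omega

end LevelGraph

structure IsMountain (P : ℤ → ℤ) (a b : ℤ) : Prop where
  add_one_lt : a + 1 < b
  left_eq_zero : P a = 0
  right_eq_zero : P b = 0
  pos : ∀ i, a < i → i < b → 0 < P i
  unitSteps : HasUnitSteps P a b

structure IsFirstTop (P : ℤ → ℤ) (a b t : ℤ) : Prop where
  left_le : a ≤ t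
  le_right : t ≤ b
  le_top : ∀ i, a ≤ i → i ≤ b → P i ≤ P t
  lt_top : ∀ i, a ≤ i → i < t → P i < P t

lemma IsFirstTop.stepNeighbors_eq_empty_of_eq_top {P : ℤ → ℤ} {a b t j : ℤ}
    (ht : IsFirstTop P a b t) (hj : P j = P t) : stepNeighbors P t b 1 j = ∅ :=
  stepNeighbors_eq_empty fun x htx hxb => by
    have := ht.le_top x (ht.left_le.trans htx) hxb
    omega

namespace IsMountain

variable {P : ℤ → ℤ} {a b t : ℤ}

lemma nonneg (hP : IsMountain P a b) {i : ℤ} (hai : a ≤ i) (hib : i ≤ b) : 0 ≤ P i := by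
  rcases hai.eq_or_lt with rfl | hai
  · exact hP.left_eq_zero.ge
  rcases hib.eq_or_lt with rfl | hib
  · exact hP.right_eq_zero.ge
  exact (hP.pos i hai hib).le

lemma top_pos (hP : IsMountain P a b) (ht : IsFirstTop P a b t) : 0 < P t :=
  (hP.pos (a + 1) (by omega) hP.add_one_lt).trans_le
    (ht.le_top (a + 1) (by omega) hP.add_one_lt.le)

lemma left_lt_top (hP : IsMountain P a b) (ht : IsFirstTop P a b t) : a < t :=
  ht.left_le.lt_of_ne fun h => (hP.top_pos ht).ne' (h ▸ hP.left_eq_zero)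

lemma top_lt_right (hP : IsMountain P a b) (ht : IsFirstTop P a b t) : t < b :=
  ht.le_right.lt_of_ne fun h => (hP.top_pos ht).ne' (h ▸ hP.right_eq_zero)

lemma unitSteps_left (hP : IsMountain P a b) (ht : IsFirstTop P a b t) : HasUnitSteps P a t :=
  hP.unitSteps.mono le_rfl ht.le_right

lemma unitSteps_right (hP : IsMountain P a b) (ht : IsFirstTop P a b t) : HasUnitSteps P t b :=
  hP.unitSteps.mono ht.left_le le_rfl

lemma stepNeighbors_left_eq_empty (hP : IsMountain P a b) (ht : IsFirstTop P a b t) :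
    stepNeighbors P a t (-1) a = ∅ :=
  stepNeighbors_eq_empty fun x hax hxt => by
    have := hP.nonneg hax (hxt.trans ht.le_right)
    rw [hP.left_eq_zero]
    omega

lemma start_mem_levelPairs (hP : IsMountain P a b) (ht : IsFirstTop P a b t) :
    (a, t) ∈ levelPairs P a b t :=
  mem_levelPairs.mpr ⟨le_rfl, ht.left_le, le_rfl, ht.le_right, by rw [hP.left_eq_zero, zero_add]⟩

lemma degree_start (hP : IsMountain P a b) (ht : IsFirstTop P a b t) :
    (levelGraph P a b t).degree ⟨(a, t), hP.start_mem_levelPairs ht⟩ = 1 := by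
  have h₁ := card_stepNeighbors_add_card_stepNeighbors_left (hP.unitSteps_left ht)
    (hP.left_lt_top ht)
  have h₂ := card_stepNeighbors_add_card_stepNeighbors_left (hP.unitSteps_right ht)
    (hP.top_lt_right ht)
  rw [hP.stepNeighbors_left_eq_empty ht, card_empty, add_zero] at h₁
  rw [ht.stepNeighbors_eq_empty_of_eq_top rfl, card_empty, zero_add] at h₂
  rw [degree_levelGraph (hP.unitSteps_left ht), hP.stepNeighbors_left_eq_empty ht,
    ht.stepNeighbors_eq_empty_of_eq_top rfl, card_empty, mul_zero, add_zero, h₁, h₂]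

lemma eq_of_odd_degree (hP : IsMountain P a b) (ht : IsFirstTop P a b t) {i j : ℤ}
    (hij : (i, j) ∈ levelPairs P a b t)
    (hodd : Odd ((levelGraph P a b t).degree ⟨(i, j), hij⟩)) :
    (i, j) = (a, t) ∨ (i, j) = (t, b) := by
  obtain ⟨hai, hit, htj, hjb, hsum⟩ : a ≤ i ∧ i ≤ t ∧ t ≤ j ∧ j ≤ b ∧ P i + P j = P t :=
    mem_levelPairs.mp hij
  rw [degree_levelGraph (hP.unitSteps_left ht) hij, ← Nat.not_even_iff_odd] at hodd
  have hPt := hP.top_pos ht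
  rcases hai.eq_or_lt with rfl | hai
  · rcases htj.eq_or_lt with rfl | htj
    · exact Or.inl rfl
    rw [hP.left_eq_zero, zero_add] at hsum
    have hjb : j < b := hjb.lt_of_ne fun h => by
      rw [h, hP.right_eq_zero] at hsum
      omega
    -- `j` is a later top, so it has no higher neighbour, and `a` has no lower one
    have h₂ := card_stepNeighbors_add_card_stepNeighbors_of_mem_Ioo (hP.unitSteps_right ht)
      (mem_Ioo.mpr ⟨htj, hjb⟩)
    rw [ht.stepNeighbors_eq_empty_of_eq_top hsum, card_empty, zero_add] at h₂
    rw [hP.stepNeighbors_left_eq_empty ht, ht.stepNeighbors_eq_empty_of_eq_top hsum, h₂]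
      at hodd
    exact (hodd (by simp)).elim
  rcases hit.eq_or_lt with rfl | hit
  · refine Or.inr (Prod.ext rfl (hjb.eq_of_not_lt fun hjb => ?_))
    have := hP.pos j (by omega) hjb
    omega
  have hPi := hP.pos i hai (by omega)
  have hPi' := ht.lt_top i hai.le hit
  have htj : t < j := htj.lt_of_ne fun h => by subst h; omega
  have hjb : j < b := hjb.lt_of_ne fun h => by
    rw [h, hP.right_eq_zero] at hsum
    omega
  exact (hodd (Nat.even_mul_add_mul
    (card_stepNeighbors_add_card_stepNeighbors_of_mem_Ioo (hP.unitSteps_left ht)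
      (mem_Ioo.mpr ⟨hai, hit⟩) ▸ even_two)
    (card_stepNeighbors_add_card_stepNeighbors_of_mem_Ioo (hP.unitSteps_right ht)
      (mem_Ioo.mpr ⟨htj, hjb⟩) ▸ even_two))).elim

end IsMountain

/-- Lemma on the mountain-climbing problem, cf. Bhatnagar et
al.. Every `{a,b}`-mountain `P` with first top `t` admits a traversal: a
sequence of pairs starting at `(a,t)` and ending at `(t,b)`, moving by one on
each coordinate at every step, keeping `P(i) + P(j) = P(t)`, the first
coordinate in `[a,t]` and the second in `[t,b]`. -/
theorem stmt18 (a b t : ℤ) (P : ℤ → ℤ)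
    (hab : a + 1 < b)
    (hPa : P a = 0) (hPb : P b = 0)
    (hpos : ∀ i, a < i → i < b → 0 < P i)
    (hstep : ∀ i, a ≤ i → i < b → |P (i + 1) - P i| = 1)
    (hta : a ≤ t) (htb : t ≤ b)
    (htmax : ∀ i, a ≤ i → i ≤ b → P i ≤ P t)
    (htfirst : ∀ i, a ≤ i → i < t → P i < P t) :
    ∃ (k : ℕ) (g : ℕ → ℤ × ℤ), 1 ≤ k ∧ g 0 = (a, t) ∧ g (k - 1) = (t, b) ∧
      ∀ s : ℕ, s + 1 < k →
        |(g (s + 1)).1 - (g s).1| = 1 ∧ |(g (s + 1)).2 - (g s).2| = 1 ∧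
        P (g s).1 + P (g s).2 = P t ∧
        a ≤ (g s).1 ∧ (g s).1 ≤ t ∧ t ≤ (g s).2 ∧ (g s).2 ≤ b := by
  have hP : IsMountain P a b := ⟨hab, hPa, hPb, hpos, hstep⟩
  have ht : IsFirstTop P a b t := ⟨hta, htb, htmax, htfirst⟩
  obtain ⟨⟨⟨i, j⟩, hij⟩, hne, hreach, hodd⟩ :=
    (levelGraph P a b t).exists_reachable_ne_odd_degree
      (v := ⟨(a, t), hP.start_mem_levelPairs ht⟩) (by rw [hP.degree_start ht]; exact odd_one)
  have hend : (i, j) = (t, b) :=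
    (hP.eq_of_odd_degree ht hij hodd).resolve_left fun h => hne (Subtype.ext h)
  obtain ⟨walk⟩ := hreach
  refine ⟨walk.length + 1, fun s => walk.getVert s, by omega,
    congrArg Subtype.val walk.getVert_zero, ?_, fun s hs => ?_⟩
  · rw [Nat.add_sub_cancel]
    exact (congrArg Subtype.val walk.getVert_length).trans hend
  · have hadj := walk.adj_getVert_succ (by omega : s < walk.length)
    obtain ⟨hai, hit, htj, hjb, hsum⟩ := mem_levelPairs.mp (walk.getVert s).2
    exact ⟨by rw [abs_sub_comm]; exact hadj.1, by rw [abs_sub_comm]; exact hadj.2, hsum,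
      hai, hit, htj, hjb⟩
end
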